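/- arXiv:2512.01520 — 12 statements merged into one kernel-verified Lean document; each statement's English description precedes it below -/
import Mathlib

section
/- Let R be a principal ideal domain with a ring automorphism σ such that for every irreducible z ∈ R and every integer m ≥ 1, σ^m(z) is not an associate of z (all σ-orbits of irreducibles are infinite). Let a ∈ R be a nonzero nonunit, let a₀ be an irreducible factor of a such that σ^{−k}(a₀) does not divide a for any k > 0, and write a = a₀·a₁. Fix n ≥ 1 and define maps X, Y : R^n → R^n by X(v₁,…,vₙ) = (a₀·σ^{−1}(vₙ), σ^{−1}(v₁), …, σ^{−1}(v_{n−1})) and Y(v₁,…,vₙ) = (σ(a·v₂), σ(a·v₃), …, σ(a·vₙ), σ(a₁·v₁)). Then the only R-submodules W of R^n satisfying X(W) ⊆ W and Y(W) ⊆ W are {0} and R^n. -/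
/-!
The operator `X^n` is diagonal, `(X^n v)_t = σ^{-t}(a₀) · σ^{-n}(v_t)`, and the primes
`σ^{-t}(a₀)`, `0 ≤ t < n`, lie in pairwise distinct `σ^n`-orbits. Hence if `v ∈ W` has nonzero
coordinates `i ≠ j`, then `σ^{-j}(a₀) σ^{-n}(v_j) · v - v_j · X^n v ∈ W` vanishes at `j` but not
at `i`, so a nonzero `W` contains a vector supported on one coordinate, which `X` moves to the
last one.

The ideal `I` of possible last coordinates is then nonzero and stable under
`r ↦ σ^{-(n-1)}(a₀) σ^{-n}(r)` (from `X^n`) and `r ↦ e σ^n(r)` (from `Y^n`), where `e` divides a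
product of the `σ^k(a)`, `k ≥ 1`, hence is coprime to every `σ^{-m}(a₀)` by the minimality of
`a₀`. Follow the `σ^n`-orbit of a prime factor of the generator of `I` up and down until it
leaves the generator, which it must since orbits are infinite: the last prime upwards is
`σ^{-(n-1)}(a₀)`, so the last one downwards is some `σ^{-m}(a₀)`, and it divides `e`, unless
`I = R`. Finally, from the last basis vector `X` produces `σ^{-j}(a₀)` and `Y` produces a
coprime element at every coordinate `j`.
-/

theorem finite_setOf_dvd {M ι : Type*} [CommMonoidWithZero M] [UniqueFactorizationMonoid M]
    {f : ι → M} (hf : ∀ i, Irreducible (f i)) (hinj : ∀ i j, Associated (f i) (f j) → i = j)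
    {g : M} (hg : g ≠ 0) : {i | f i ∣ g}.Finite := by
  classical
  refine Set.Finite.subset ((UniqueFactorizationMonoid.factors g).toFinset.finite_toSet.biUnion
    fun q _ => (?_ : {i | Associated (f i) q}.Subsingleton).finite) fun i hi => ?_
  · exact fun i hi j hj => hinj i j (hi.trans (Associated.symm hj))
  · obtain ⟨q, hq, hiq⟩ := UniqueFactorizationMonoid.exists_mem_factors_of_dvd hg (hf i) hi
    exact Set.mem_biUnion (Multiset.mem_toFinset.mpr hq) hiq

section Orbits

variable {R : Type*} [CommRing R]

def HasInfiniteOrbits (τ : R ≃+* R) : Prop :=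
  ∀ z : R, Irreducible z → ∀ m m' : ℤ, Associated ((τ ^ m) z) ((τ ^ m') z) → m = m'

theorem hasInfiniteOrbits_of_not_associated {σ : R ≃+* R}
    (horb : ∀ z : R, Irreducible z → ∀ m : ℕ, 1 ≤ m → ¬ Associated ((σ ^ m) z) z) :
    HasInfiniteOrbits σ := by
  have hlt : ∀ z, Irreducible z → ∀ m m' : ℤ, m < m' →
      ¬ Associated ((σ ^ m) z) ((σ ^ m') z) := by
    intro z hz m m' hmm' hassoc
    obtain ⟨k, hk⟩ : ∃ k : ℕ, m' = (k + 1 : ℕ) + m := ⟨(m' - m - 1).toNat, by omega⟩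
    refine horb ((σ ^ m) z) ((MulEquiv.irreducible_iff _).mpr hz) (k + 1) (by omega) ?_
    rw [← RingAut.mul_apply, ← zpow_natCast, ← zpow_add, ← hk]
    exact hassoc.symm
  intro z hz m m' hassoc
  rcases lt_trichotomy m m' with h | h | h
  · exact absurd hassoc (hlt z hz m m' h)
  · exact h
  · exact absurd hassoc.symm (hlt z hz m' m h)

theorem HasInfiniteOrbits.pow {τ : R ≃+* R} (hτ : HasInfiniteOrbits τ) {n : ℕ}
    (hn : n ≠ 0) : HasInfiniteOrbits (τ ^ n) := by
  intro z hz m m' hassoc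
  rw [← zpow_natCast, ← zpow_mul, ← zpow_mul] at hassoc
  exact mul_left_cancel₀ (by exact_mod_cast hn) (hτ z hz _ _ hassoc)

theorem HasInfiniteOrbits.inv {τ : R ≃+* R} (hτ : HasInfiniteOrbits τ) :
    HasInfiniteOrbits τ⁻¹ := by
  intro z hz m m' hassoc
  rw [inv_zpow', inv_zpow'] at hassoc
  exact neg_injective (hτ z hz _ _ hassoc)

theorem HasInfiniteOrbits.pow_injective {τ : R ≃+* R} (hτ : HasInfiniteOrbits τ) {z : R}
    (hz : Irreducible z) {k l : ℕ} (h : Associated ((τ ^ k) z) ((τ ^ l) z)) : k = l := by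
  rw [← zpow_natCast, ← zpow_natCast] at h
  exact_mod_cast hτ z hz _ _ h

theorem HasInfiniteOrbits.not_associated_inv_pow_apply {σ : R ≃+* R} (hσ : HasInfiniteOrbits σ)
    {a₀ : R} (ha₀ : Irreducible a₀) {n : ℕ} {i j : Fin n} (hij : i ≠ j) (k : ℤ) :
    ¬ Associated ((σ⁻¹ ^ (i : ℕ)) a₀) (((σ⁻¹ ^ n) ^ k) ((σ⁻¹ ^ (j : ℕ)) a₀)) := by
  intro h
  rw [← RingAut.mul_apply,
    show (σ⁻¹ ^ n) ^ k * σ⁻¹ ^ (j : ℕ) = σ ^ (-((n : ℤ) * k + j)) by group,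
    show σ⁻¹ ^ (i : ℕ) = σ ^ (-(i : ℤ)) by group] at h
  have hdvd : (n : ℤ) ∣ (j : ℤ) - i := ⟨-k, by linarith [hσ a₀ ha₀ _ _ h]⟩
  have := Int.eq_zero_of_abs_lt_dvd hdvd (abs_lt.mpr ⟨by omega, by omega⟩)
  exact hij (Fin.ext (by omega))

theorem HasInfiniteOrbits.exists_pow_apply_dvd_not_dvd [UniqueFactorizationMonoid R]
    {τ : R ≃+* R} (hτ : HasInfiniteOrbits τ) {p g : R} (hp : Irreducible p) (hg : g ≠ 0)
    (hpg : p ∣ g) : ∃ k : ℕ, (τ ^ k) p ∣ g ∧ ¬ (τ ^ (k + 1)) p ∣ g := by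
  by_contra! hclosed
  have hall : ∀ k : ℕ, (τ ^ k) p ∣ g := fun k => by
    induction k with
    | zero => simpa using hpg
    | succ k ih => exact hclosed k ih
  refine Set.infinite_univ (α := ℕ) ((finite_setOf_dvd (f := fun k => (τ ^ k) p)
    (fun _ => (MulEquiv.irreducible_iff _).mpr hp) (fun _ _ h => hτ.pow_injective hp h)
    hg).subset fun k _ => hall k)

end Orbits

/- Over the fraction field the equation says `p / q = τ f / f` with `f = y / x`. Summed over a
`τ`-orbit of primes, the valuations of `τ f / f` cancel, while those of `p / q` add up to `1` on
the orbit of `p`. The proof is a descent cancelling common prime factors. -/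
theorem mul_apply_mul_ne {R : Type*} [CommRing R] [IsDomain R] [WfDvdMonoid R]
    (τ : R ≃+* R) {p q : R} (hp : Irreducible p) (hq : Prime q)
    (hpq : ∀ k : ℤ, ¬ Associated p ((τ ^ k) q)) {x y : R} (hx : x ≠ 0) (hy : y ≠ 0) :
    p * τ x * y ≠ q * τ y * x := by
  suffices ∀ z q x y, Prime q → (∀ k : ℤ, ¬ Associated p ((τ ^ k) q)) → x ≠ 0 → y ≠ 0 →
      x * y = z → p * τ x * y ≠ q * τ y * x from this _ q x y hq hpq hx hy rfl
  intro z
  induction z using (wellFounded_dvdNotUnit (α := R)).induction with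
  | _ z ih =>
  intro q x y hq hpq hx hy hz heq
  have hq0 := hq.ne_zero
  have hqp : ¬ q ∣ p := fun h =>
    hpq 0 (by simpa using (hq.irreducible.associated_of_dvd hp h).symm)
  rcases hq.dvd_or_dvd (⟨τ y * x, by rw [heq, mul_assoc]⟩ : q ∣ p * τ x * y)
    with hdvd | ⟨y', rfl⟩
  · rcases hq.dvd_or_dvd hdvd with hqp' | ⟨x', hx'⟩
    · exact hqp hqp'
    have hx_eq : x = τ.symm q * τ.symm x' := by
      rw [← map_mul, ← hx', RingEquiv.symm_apply_apply]
    have hx'0 : τ.symm x' ≠ 0 := by rintro h; simp [hx_eq, h] at hx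
    refine ih (τ.symm x' * y) ⟨mul_ne_zero hx'0 hy, τ.symm q, ?_, by rw [← hz, hx_eq]; ring⟩
      (τ.symm q) (τ.symm x') y ((MulEquiv.prime_iff _).mpr hq) (fun k => ?_) hx'0 hy rfl ?_
    · exact fun hu => hq.not_isUnit (by simpa using hu.map τ)
    · rw [← RingAut.inv_apply, ← RingAut.mul_apply, ← zpow_sub_one]; exact hpq _
    · apply mul_left_cancel₀ hq0
      rw [RingEquiv.apply_symm_apply]
      rw [hx', hx_eq] at heq
      linear_combination heq
  · have hy'0 : y' ≠ 0 := right_ne_zero_of_mul hy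
    refine ih (x * y') ⟨mul_ne_zero hx hy'0, q, hq.not_isUnit, by rw [← hz]; ring⟩
      (τ q) x y' ((MulEquiv.prime_iff _).mpr hq) (fun k => ?_) hx hy'0 rfl ?_
    · rw [← RingAut.mul_apply, ← zpow_add_one]; exact hpq _
    · apply mul_left_cancel₀ hq0
      rw [map_mul] at heq
      linear_combination heq

theorem Submodule.exists_single_mem_of_mul_map_mem {R ι : Type*} [CommRing R] [IsDomain R]
    [WfDvdMonoid R] [Fintype ι] [DecidableEq ι] (τ : R ≃+* R) {d : ι → R}
    (hd : ∀ i, Prime (d i))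
    (hdist : ∀ i j, i ≠ j → ∀ k : ℤ, ¬ Associated (d i) ((τ ^ k) (d j)))
    {W : Submodule R (ι → R)} (hW : ∀ v ∈ W, (fun i => d i * τ (v i)) ∈ W) (hne : W ≠ ⊥) :
    ∃ i, ∃ r ≠ 0, Pi.single i r ∈ W := by
  classical
  let supp (v : ι → R) : Finset ι := {i | v i ≠ 0}
  obtain ⟨v, ⟨hvW, hv0⟩, hmin⟩ := (measure fun v => (supp v).card).wf.has_min
    {v | v ∈ W ∧ v ≠ 0} ((Submodule.ne_bot_iff W).mp hne)
  obtain ⟨i, hi⟩ := Function.ne_iff.mp hv0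
  refine ⟨i, v i, hi, ?_⟩
  by_contra hsingle
  obtain ⟨j, hji, hj⟩ : ∃ j, j ≠ i ∧ v j ≠ 0 := by
    by_contra! h
    refine hsingle (by convert hvW; ext t; by_cases hti : t = i <;> simp_all)
  let w := (d j * τ (v j)) • v - v j • fun t => d t * τ (v t)
  have hw (t : ι) : w t = d j * τ (v j) * v t - d t * τ (v t) * v j := by
    simp only [w, Pi.sub_apply, Pi.smul_apply, smul_eq_mul]; ring
  have hwi : w i ≠ 0 := by
    rw [hw, sub_ne_zero]
    exact mul_apply_mul_ne τ (hd j).irreducible (hd i) (hdist j i hji) hj hi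
  have hsupp : supp w ⊂ supp v := by
    refine Finset.ssubset_iff_of_subset (fun t ht => ?_) |>.mpr
      ⟨j, by simpa [supp] using hj, ?_⟩
    · simp only [supp, Finset.mem_filter, Finset.mem_univ, true_and] at ht ⊢
      exact fun hvt => ht (by simp [hw, hvt])
    · simp [supp, hw]
  exact hmin w ⟨W.sub_mem (W.smul_mem _ hvW) (W.smul_mem _ (hW v hvW)),
    fun h => hwi (by simp [h])⟩ (Finset.card_lt_card hsupp)

theorem Ideal.eq_top_of_mul_map_mem {R : Type*} [CommRing R] [IsDomain R]
    [IsPrincipalIdealRing R] {τ : R ≃+* R} (hτ : HasInfiniteOrbits τ) {I : Ideal R}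
    (hI : I ≠ ⊥) {d e : R} (hd : Irreducible d) (hde : ∀ m : ℕ, IsCoprime e ((τ⁻¹ ^ m) d))
    (hdI : ∀ r ∈ I, d * τ⁻¹ r ∈ I) (heI : ∀ r ∈ I, e * τ r ∈ I) : I = ⊤ := by
  by_contra hItop
  set g := Submodule.IsPrincipal.generator I
  have hg0 : g ≠ 0 := by rwa [ne_eq, ← Submodule.IsPrincipal.eq_bot_iff_generator_eq_zero]
  have hgI : g ∈ I := Submodule.IsPrincipal.generator_mem I
  have hgu : ¬ IsUnit g := fun hu => hItop (I.eq_top_of_isUnit_mem hgI hu)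
  have hgdvd : ∀ r ∈ I, g ∣ r := fun r => (Submodule.IsPrincipal.mem_iff_generator_dvd I).mp
  obtain ⟨q, hq, hqg⟩ := WfDvdMonoid.exists_irreducible_factor hgu hg0
  -- follow the orbit of `q` upwards until it leaves `g`: the last prime there is `d`
  obtain ⟨k, hk, hk'⟩ := hτ.exists_pow_apply_dvd_not_dvd hq hg0 hqg
  have hkd : Associated ((τ ^ k) q) d := by
    have hprime : Prime ((τ ^ k) q) := (MulEquiv.prime_iff _).mpr hq.prime
    rcases hprime.dvd_or_dvd (hk.trans (hgdvd _ (hdI g hgI))) with h | h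
    · exact hprime.irreducible.associated_of_dvd hd h
    · refine absurd ?_ hk'
      simpa [pow_succ'] using map_dvd τ h
  -- and downwards: the last prime there divides `e`
  obtain ⟨l, hl, hl'⟩ := hτ.inv.exists_pow_apply_dvd_not_dvd hq hg0 hqg
  have hle : (τ⁻¹ ^ l) q ∣ e := by
    have hprime : Prime ((τ⁻¹ ^ l) q) := (MulEquiv.prime_iff _).mpr hq.prime
    rcases hprime.dvd_or_dvd (hl.trans (hgdvd _ (heI g hgI))) with h | h
    · exact h
    · refine absurd ?_ hl'
      simpa [pow_succ'] using map_dvd τ⁻¹ h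
  have hlk : Associated ((τ⁻¹ ^ l) q) ((τ⁻¹ ^ (l + k)) d) := by
    have h := hkd.map (τ⁻¹ ^ (l + k))
    rwa [← RingAut.mul_apply, show τ⁻¹ ^ (l + k) * τ ^ k = τ⁻¹ ^ l by group] at h
  exact ((MulEquiv.irreducible_iff _).mpr hd).not_isUnit
    ((hde (l + k)).isUnit_of_dvd' (hlk.symm.dvd.trans hle) dvd_rfl)

section CoordIdeal

variable {R ι : Type*} [CommRing R] [DecidableEq ι]

def coordIdeal (W : Submodule R (ι → R)) (i : ι) : Ideal R :=
  W.comap (LinearMap.single R (fun _ => R) i)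

theorem mem_coordIdeal {W : Submodule R (ι → R)} {i : ι} {r : R} :
    r ∈ coordIdeal W i ↔ Pi.single i r ∈ W :=
  Iff.rfl

theorem Submodule.eq_top_of_coordIdeal_eq_top [Finite ι] {W : Submodule R (ι → R)}
    (h : ∀ i, coordIdeal W i = ⊤) : W = ⊤ := by
  rw [eq_top_iff, ← (Pi.basisFun R ι).span_eq, Submodule.span_le]
  rintro _ ⟨i, rfl⟩
  rw [Pi.basisFun_apply, SetLike.mem_coe, ← mem_coordIdeal, h i]
  exact Submodule.mem_top

end CoordIdeal

section WeylModule

variable {R : Type*} [CommRing R] (σ : R ≃+* R) {n : ℕ}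

def weylX (a₀ : R) (hn : 1 ≤ n) : AddMonoid.End (Fin n → R) where
  toFun v i := if (i : ℕ) = 0 then a₀ * σ⁻¹ (v ⟨n - 1, Nat.sub_lt hn Nat.one_pos⟩)
    else σ⁻¹ (v ⟨(i : ℕ) - 1, (Nat.sub_le _ _).trans_lt i.isLt⟩)
  map_zero' := by ext; simp
  map_add' v w := by ext i; simp only [Pi.add_apply, map_add]; split_ifs <;> ring

def weylY (a a₁ : R) (hn : 1 ≤ n) : AddMonoid.End (Fin n → R) where
  toFun v i := if h : (i : ℕ) = n - 1 then σ (a₁ * v ⟨0, hn⟩)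
    else σ (a * v ⟨(i : ℕ) + 1, Nat.lt_of_le_of_ne i.isLt fun e => h (Nat.eq_sub_of_add_eq e)⟩)
  map_zero' := by ext; simp
  map_add' v w := by ext i; simp only [Pi.add_apply, mul_add, map_add]; split_ifs <;> rfl

def weylProd (a : R) (k : ℕ) : R :=
  ∏ i ∈ Finset.range k, (σ ^ (i + 1)) a

variable {σ} {a a₀ a₁ : R} {hn : 1 ≤ n}

theorem weylX_apply (v : Fin n → R) (i : Fin n) :
    weylX σ a₀ hn v i = if (i : ℕ) = 0 then a₀ * σ⁻¹ (v ⟨n - 1, Nat.sub_lt hn Nat.one_pos⟩)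
      else σ⁻¹ (v ⟨(i : ℕ) - 1, (Nat.sub_le _ _).trans_lt i.isLt⟩) :=
  rfl

theorem weylY_apply (v : Fin n → R) (i : Fin n) :
    weylY σ a a₁ hn v i = if h : (i : ℕ) = n - 1 then σ (a₁ * v ⟨0, hn⟩)
      else σ (a * v ⟨(i : ℕ) + 1,
        Nat.lt_of_le_of_ne i.isLt fun e => h (Nat.eq_sub_of_add_eq e)⟩) :=
  rfl

theorem weylProd_succ (k : ℕ) : weylProd σ a (k + 1) = σ (a * weylProd σ a k) := by
  simp only [weylProd, Finset.prod_range_succ', map_mul, map_prod, ← RingAut.mul_apply,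
    ← pow_succ', zero_add, pow_one, mul_comm]

theorem weylX_single_of_val_eq_succ {j l : Fin n} (h : (l : ℕ) = j + 1) (s : R) :
    weylX σ a₀ hn (Pi.single j s) = Pi.single l (σ⁻¹ s) := by
  ext i
  simp only [weylX_apply, Pi.single_apply, Fin.ext_iff]
  split_ifs <;> first | omega | simp

theorem weylX_single_of_val_eq_last {j l : Fin n} (hj : (j : ℕ) = n - 1) (hl : (l : ℕ) = 0)
    (s : R) : weylX σ a₀ hn (Pi.single j s) = Pi.single l (a₀ * σ⁻¹ s) := by
  ext i
  simp only [weylX_apply, Pi.single_apply, Fin.ext_iff]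
  split_ifs <;> first | omega | simp

theorem weylY_single_of_val_eq_succ {j l : Fin n} (h : (j : ℕ) = l + 1) (s : R) :
    weylY σ a a₁ hn (Pi.single j s) = Pi.single l (σ (a * s)) := by
  ext i
  simp only [weylY_apply, Pi.single_apply, Fin.ext_iff]
  split_ifs <;> first | omega | simp

theorem weylY_single_of_val_eq_zero {j l : Fin n} (hj : (j : ℕ) = 0) (hl : (l : ℕ) = n - 1)
    (s : R) : weylY σ a a₁ hn (Pi.single j s) = Pi.single l (σ (a₁ * s)) := by
  ext i
  simp only [weylY_apply, Pi.single_apply, Fin.ext_iff]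
  split_ifs <;> first | omega | simp

theorem weylX_pow_single {j l : Fin n} {k : ℕ} (h : (l : ℕ) = j + k) (s : R) :
    (weylX σ a₀ hn ^ k) (Pi.single j s) = Pi.single l ((σ⁻¹ ^ k) s) := by
  induction k generalizing l with
  | zero => obtain rfl : l = j := Fin.ext h; simp
  | succ k ih =>
    rw [pow_succ', AddMonoid.End.coe_mul, Function.comp_apply,
      ih (l := ⟨j + k, by omega⟩) rfl, weylX_single_of_val_eq_succ (by simp; omega), pow_succ',
      RingAut.mul_apply]

theorem weylY_pow_single {j l : Fin n} {k : ℕ} (h : (j : ℕ) = l + k) (s : R) :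
    (weylY σ a a₁ hn ^ k) (Pi.single j s) = Pi.single l (weylProd σ a k * (σ ^ k) s) := by
  induction k generalizing l with
  | zero => obtain rfl : l = j := Fin.ext h.symm; simp [weylProd]
  | succ k ih =>
    rw [pow_succ', AddMonoid.End.coe_mul, Function.comp_apply,
      ih (l := ⟨l + 1, by omega⟩) (by simp; omega), weylY_single_of_val_eq_succ rfl,
      weylProd_succ, pow_succ', RingAut.mul_apply, ← map_mul, mul_assoc]

theorem weylX_pow_n_single (j : Fin n) (s : R) :
    (weylX σ a₀ hn ^ n) (Pi.single j s) = Pi.single j ((σ⁻¹ ^ (j : ℕ)) a₀ * (σ⁻¹ ^ n) s) := by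
  have hsplit : weylX σ a₀ hn ^ n =
      weylX σ a₀ hn ^ (j : ℕ) * (weylX σ a₀ hn * weylX σ a₀ hn ^ (n - 1 - j)) := by
    rw [← pow_succ', ← pow_add]; congr 1; omega
  rw [hsplit, AddMonoid.End.coe_mul, AddMonoid.End.coe_mul, Function.comp_apply,
    Function.comp_apply,
    weylX_pow_single (l := ⟨n - 1, Nat.sub_lt hn Nat.one_pos⟩) (by simp; omega),
    weylX_single_of_val_eq_last (l := ⟨0, hn⟩) rfl rfl, weylX_pow_single (l := j) (by simp),
    map_mul, ← RingAut.mul_apply, ← RingAut.mul_apply, ← pow_succ, ← pow_add,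
    show (j : ℕ) + 1 + (n - 1 - j) = n by omega]

theorem weylX_pow_n_apply (v : Fin n → R) :
    (weylX σ a₀ hn ^ n) v = fun t : Fin n => (σ⁻¹ ^ (t : ℕ)) a₀ * (σ⁻¹ ^ n) (v t) := by
  conv_lhs => rw [← Finset.univ_sum_single v]
  simp_rw [map_sum, weylX_pow_n_single]
  exact Finset.univ_sum_single _

theorem weylY_pow_n_single {j : Fin n} (hj : (j : ℕ) = n - 1) (s : R) :
    (weylY σ a a₁ hn ^ n) (Pi.single j s) =
      Pi.single j (σ (a₁ * weylProd σ a (n - 1)) * (σ ^ n) s) := by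
  have hsplit : weylY σ a a₁ hn ^ n = weylY σ a a₁ hn * weylY σ a a₁ hn ^ (n - 1) := by
    rw [← pow_succ']; congr 1; omega
  rw [hsplit, AddMonoid.End.coe_mul, Function.comp_apply,
    weylY_pow_single (l := ⟨0, hn⟩) (by simp; omega),
    weylY_single_of_val_eq_zero rfl hj, map_mul, map_mul, ← RingAut.mul_apply, ← pow_succ',
    Nat.sub_add_cancel hn, ← mul_assoc, ← map_mul]

end WeylModule

section Simplicity

variable {R : Type*} [CommRing R] {σ : R ≃+* R} {n : ℕ} {a a₀ a₁ : R} {hn : 1 ≤ n}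

theorem isCoprime_weylProd [IsBezout R] (ha₀ : Irreducible a₀)
    (hmin : ∀ k : ℕ, 0 < k → ¬ (σ⁻¹ ^ k) a₀ ∣ a) (k m : ℕ) :
    IsCoprime (weylProd σ a k) ((σ⁻¹ ^ m) a₀) := by
  refine IsCoprime.prod_left fun i _ =>
    (((MulEquiv.irreducible_iff _).mpr ha₀).coprime_iff_not_dvd.mpr fun h => ?_).symm
  refine hmin (i + 1 + m) (by omega) ?_
  have := map_dvd (σ⁻¹ ^ (i + 1)) h
  rwa [← RingAut.mul_apply, ← RingAut.mul_apply, ← pow_add,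
    show σ⁻¹ ^ (i + 1) * σ ^ (i + 1) = 1 by group, RingAut.one_apply] at this

theorem coordIdeal_last_ne_bot [IsDomain R] [IsPrincipalIdealRing R]
    (hσ : HasInfiniteOrbits σ) (ha₀ : Irreducible a₀) {W : Submodule R (Fin n → R)}
    (hXW : Set.MapsTo (weylX σ a₀ hn) W W) (hW : W ≠ ⊥) :
    coordIdeal W ⟨n - 1, Nat.sub_lt hn Nat.one_pos⟩ ≠ ⊥ := by
  obtain ⟨j, r, hr, hjr⟩ := Submodule.exists_single_mem_of_mul_map_mem (σ⁻¹ ^ n)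
    (fun _ => (MulEquiv.prime_iff _).mpr ha₀.prime)
    (fun _ _ hij => hσ.not_associated_inv_pow_apply ha₀ hij)
    (fun v hv => by
      have h := hXW.iterate n hv
      rwa [← AddMonoid.End.coe_pow, weylX_pow_n_apply] at h) hW
  refine (Submodule.ne_bot_iff _).mpr ⟨(σ⁻¹ ^ (n - 1 - j)) r, ?_, by simpa using hr⟩
  have h := hXW.iterate (n - 1 - j) hjr
  rwa [← AddMonoid.End.coe_pow,
    weylX_pow_single (l := ⟨n - 1, Nat.sub_lt hn Nat.one_pos⟩) (by simp; omega)] at h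

theorem coordIdeal_last_eq_top [IsDomain R] [IsPrincipalIdealRing R]
    (hσ : HasInfiniteOrbits σ) (ha₀ : Irreducible a₀) (hfac : a = a₀ * a₁)
    (hcop : ∀ k m : ℕ, IsCoprime (weylProd σ a k) ((σ⁻¹ ^ m) a₀)) {W : Submodule R (Fin n → R)}
    (hXW : Set.MapsTo (weylX σ a₀ hn) W W) (hYW : Set.MapsTo (weylY σ a a₁ hn) W W)
    (hlast : coordIdeal W ⟨n - 1, Nat.sub_lt hn Nat.one_pos⟩ ≠ ⊥) :
    coordIdeal W ⟨n - 1, Nat.sub_lt hn Nat.one_pos⟩ = ⊤ := by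
  refine Ideal.eq_top_of_mul_map_mem (hσ.pow (n := n) (by omega)) hlast
    ((MulEquiv.irreducible_iff (σ⁻¹ ^ (n - 1))).mpr ha₀) (e := σ (a₁ * weylProd σ a (n - 1)))
    (fun m => ?_) (fun r hr => ?_) (fun r hr => ?_)
  · rw [← RingAut.mul_apply,
      show (σ ^ n)⁻¹ ^ m * σ⁻¹ ^ (n - 1) = σ⁻¹ ^ (n * m + (n - 1)) by group]
    refine (hcop n _).of_isCoprime_of_dvd_left ?_
    rw [← Nat.sub_add_cancel hn, weylProd_succ]
    exact map_dvd σ (mul_dvd_mul_right (Dvd.intro_left a₀ hfac.symm) _)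
  · have h := hXW.iterate n (mem_coordIdeal.mp hr)
    rw [← AddMonoid.End.coe_pow, weylX_pow_n_single] at h
    rwa [← inv_pow]
  · have h := hYW.iterate n (mem_coordIdeal.mp hr)
    rwa [← AddMonoid.End.coe_pow, weylY_pow_n_single rfl] at h

theorem coordIdeal_eq_top_of_single_last_mem {W : Submodule R (Fin n → R)}
    (hXW : Set.MapsTo (weylX σ a₀ hn) W W) (hYW : Set.MapsTo (weylY σ a a₁ hn) W W)
    (hcop : ∀ k m : ℕ, IsCoprime (weylProd σ a k) ((σ⁻¹ ^ m) a₀))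
    (h1 : Pi.single (⟨n - 1, Nat.sub_lt hn Nat.one_pos⟩ : Fin n) (1 : R) ∈ W) (i : Fin n) :
    coordIdeal W i = ⊤ := by
  have hX1 : (σ⁻¹ ^ (i : ℕ)) a₀ ∈ coordIdeal W i := by
    have h := hXW.iterate i (hXW h1)
    rwa [weylX_single_of_val_eq_last (l := ⟨0, hn⟩) rfl rfl, map_one, mul_one,
      ← AddMonoid.End.coe_pow, weylX_pow_single (l := i) (by simp)] at h
  have hY1 : weylProd σ a (n - 1 - i) ∈ coordIdeal W i := by
    have h := hYW.iterate (n - 1 - i) h1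
    rwa [← AddMonoid.End.coe_pow, weylY_pow_single (l := i) (by simp; omega), map_one,
      mul_one] at h
  obtain ⟨u, w, huw⟩ := hcop (n - 1 - i) i
  rw [Ideal.eq_top_iff_one, ← huw]
  exact add_mem (Ideal.mul_mem_left _ u hY1) (Ideal.mul_mem_left _ w hX1)

end Simplicity

/-- Simplicity of the rank-`n` `R`-free module `V_n(a₀)` over the
generalized Weyl algebra `R(σ,a)`, where `a₀` is a minimal irreducible factor of `a`:
the only `R`-submodules of `R^n` stable under the actions `X` of `x` and `Y` of `y`
are `0` and `R^n`. -/
theorem stmt_0 {R : Type*} [CommRing R] [IsDomain R] [IsPrincipalIdealRing R]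
    (σ : R ≃+* R)
    (horb : ∀ z : R, Irreducible z → ∀ m : ℕ, 1 ≤ m → ¬ Associated ((σ ^ m) z) z)
    (a a₀ a₁ : R)
    (ha₀ : Irreducible a₀) (hfac : a = a₀ * a₁)
    (hmin : ∀ k : ℕ, 0 < k → ¬ ((σ⁻¹ ^ k) a₀ ∣ a))
    (n : ℕ) (hn : 1 ≤ n)
    (W : Submodule R (Fin n → R))
    (hX : ∀ v ∈ W, (fun i : Fin n =>
        if (i : ℕ) = 0 then a₀ * σ⁻¹ (v ⟨n - 1, by omega⟩)
        else σ⁻¹ (v ⟨(i : ℕ) - 1, by have := i.isLt; omega⟩)) ∈ W)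
    (hY : ∀ v ∈ W, (fun i : Fin n =>
        if h : (i : ℕ) = n - 1 then σ (a₁ * v ⟨0, by omega⟩)
        else σ (a * v ⟨(i : ℕ) + 1, by have := i.isLt; omega⟩)) ∈ W) :
    W = ⊥ ∨ W = ⊤ := by
  refine or_iff_not_imp_left.mpr fun hW => ?_
  have hσ := hasInfiniteOrbits_of_not_associated horb
  have hXW : Set.MapsTo (weylX σ a₀ hn) W W := fun v hv => hX v hv
  have hYW : Set.MapsTo (weylY σ a a₁ hn) W W := fun v hv => hY v hv
  have hcop := isCoprime_weylProd (σ := σ) ha₀ hmin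
  have htop := coordIdeal_last_eq_top hσ ha₀ hfac hcop hXW hYW
    (coordIdeal_last_ne_bot hσ ha₀ hXW hW)
  exact Submodule.eq_top_of_coordIdeal_eq_top <|
    coordIdeal_eq_top_of_single_last_mem hXW hYW hcop (mem_coordIdeal.mp (htop ▸ Submodule.mem_top))
end

section
/- Let R be a principal ideal domain with a ring automorphism σ and let a ∈ R be nonzero. Then the following are equivalent: (i) for every divisor p of a, setting q = σ(a/p), the only (p,q)-invariant ideals of R are 0 and R; (ii) either R is a field, or all three of the following hold: σ^n ≠ id for every n ≥ 1; the only ideals I of R with σ(I) = I are 0 and R; and R·a + R·σ^n(a) = R for every n ≥ 1. -/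
/-!
A `σ`-stable ideal is `(p,q)`-invariant for all `p, q`, so (i) gives `σ`-simplicity. Outside the
field case, `σ`-simplicity makes the `σᵏ π` (`k ∈ ℤ`) for a prime `π` pairwise non-associated: if
`σⁿ π ~ π` with `n ≥ 1`, the orbit product `c = π · σπ ⋯ σⁿ⁻¹π` satisfies `σ(c) ~ c` and generates
a proper nonzero `σ`-stable ideal. In particular `σⁿ ≠ 1`. If a prime `π` divides `a` and `σⁿ(a)`,
then `π · σ⁻ⁿπ ∣ a`, and the orbit product of `π` along `σ⁻¹` generates a proper nonzero
`(π, σ(a/π))`-invariant ideal; hence `Ra + Rσⁿ(a) = R`.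

For the converse, let `(d)` be a proper nonzero `(p, σ r)`-invariant ideal and `π ∣ d` prime. Only
finitely many `σᵏ π` divide `d`; if `j` is the largest such `k`, then `d ∣ σ⁻¹(d) p` forces
`σʲ π ∣ p`, and if `k` is the smallest, `d ∣ σ(d) σ(r)` forces `σᵏ⁻¹ π ∣ r`. Then `σʲ π` divides
both `a` and `σʲ⁻ᵏ⁺¹(a)`.
-/

/-- An ideal `I` of `R` is `(p,q)`-invariant if `σ⁻¹(i)·p ∈ I` and `σ(i)·q ∈ I`
for every `i ∈ I`. -/
def PQInvariant {R : Type*} [CommRing R] (σ : R ≃+* R) (p q : R) (I : Ideal R) : Prop :=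
  ∀ i ∈ I, σ⁻¹ i * p ∈ I ∧ σ i * q ∈ I

theorem finite_setOf_dvd_of_associated_injective {α ι : Type*} [CommMonoidWithZero α]
    [UniqueFactorizationMonoid α] {f : ι → α} (hf : ∀ i, Irreducible (f i))
    (hinj : ∀ i j, Associated (f i) (f j) → i = j) {d : α} (hd : d ≠ 0) :
    {i | f i ∣ d}.Finite := by
  choose! q hq hassoc using fun i (hi : f i ∣ d) =>
    UniqueFactorizationMonoid.exists_mem_factors_of_dvd hd (hf i) hi
  refine Set.Finite.of_injOn (fun i hi => hq i hi) (fun i hi j hj hij => hinj i j ?_)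
    (UniqueFactorizationMonoid.factors d).finite_toSet
  exact (hassoc i hi).trans (hij ▸ (hassoc j hj).symm)

open Finset

section CommRing

variable {R : Type*} [CommRing R] (σ : R ≃+* R)

def IsSigmaSimple : Prop :=
  ∀ I : Ideal R, Ideal.map (σ : R →+* R) I = I → I = ⊥ ∨ I = ⊤

def orbitProd (x : R) (n : ℕ) : R :=
  ∏ i ∈ range n, (σ ^ i) x

theorem span_pair_eq_top_iff_isCoprime (x y : R) : Ideal.span {x, y} = ⊤ ↔ IsCoprime x y := by
  rw [Ideal.span_insert, Ideal.sup_eq_top_iff_isCoprime]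

variable {σ}

theorem pqInvariant_of_map_eq {I : Ideal R} (hI : Ideal.map (σ : R →+* R) I = I) (p q : R) :
    PQInvariant σ p q I := by
  intro i hi
  have hσi : σ i ∈ I := hI ▸ Ideal.mem_map_of_mem _ hi
  have hσ'i : σ⁻¹ i ∈ I := by
    rw [← hI, Ideal.map_comap_of_equiv] at hi
    exact hi
  exact ⟨I.mul_mem_right p hσ'i, I.mul_mem_right q hσi⟩

theorem pqInvariant_span_singleton {c p q : R} (hp : c ∣ σ⁻¹ c * p) (hq : c ∣ σ c * q) :
    PQInvariant σ p q (Ideal.span {c}) := by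
  intro i hi
  obtain ⟨t, rfl⟩ := Ideal.mem_span_singleton.1 hi
  simp only [Ideal.mem_span_singleton, map_mul]
  exact ⟨(hp.mul_right (σ⁻¹ t)).trans (dvd_of_eq (by ring)),
    (hq.mul_right (σ t)).trans (dvd_of_eq (by ring))⟩

variable (σ) in
theorem map_orbitProd_mul (x : R) (n : ℕ) :
    σ (orbitProd σ x n) * x = orbitProd σ x n * (σ ^ n) x := by
  induction n with
  | zero => simp [orbitProd]
  | succ n ih =>
    simp only [orbitProd] at ih ⊢
    rw [prod_range_succ, map_mul, mul_right_comm, ih, pow_succ', RingAut.mul_apply, mul_assoc]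

theorem dvd_orbitProd (x : R) {n : ℕ} (hn : n ≠ 0) : x ∣ orbitProd σ x n :=
  dvd_prod_of_mem (fun i => (σ ^ i) x) (mem_range.2 (Nat.pos_of_ne_zero hn))

theorem orbitProd_ne_zero [IsDomain R] {x : R} (hx : x ≠ 0) (n : ℕ) : orbitProd σ x n ≠ 0 :=
  prod_ne_zero_iff.2 fun i _ => (map_ne_zero_iff _ (σ ^ i).injective).2 hx

end CommRing

section Domain

variable {R : Type*} [CommRing R] [IsDomain R] {σ : R ≃+* R}

theorem IsSigmaSimple.eq_zero_or_isUnit (hσ : IsSigmaSimple σ) {c : R}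
    (hc : Associated (σ c) c) : c = 0 ∨ IsUnit c := by
  have hmap : Ideal.map (σ : R →+* R) (Ideal.span {c}) = Ideal.span {c} := by
    rw [Ideal.map_span, Set.image_singleton]
    exact Ideal.span_singleton_eq_span_singleton.2 hc
  simpa only [Ideal.span_singleton_eq_bot, Ideal.span_singleton_eq_top] using hσ _ hmap

theorem IsSigmaSimple.not_associated_pow_apply (hσ : IsSigmaSimple σ) {x : R} (hx : x ≠ 0)
    (hxu : ¬IsUnit x) {n : ℕ} (hn : n ≠ 0) : ¬Associated ((σ ^ n) x) x := by
  intro hassoc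
  have hc : Associated (σ (orbitProd σ x n)) (orbitProd σ x n) := by
    refine Associated.of_mul_right ?_ (Associated.refl x) hx
    rw [map_orbitProd_mul]
    exact hassoc.mul_left _
  rcases hσ.eq_zero_or_isUnit hc with h | h
  · exact orbitProd_ne_zero hx n h
  · exact hxu (isUnit_of_dvd_unit (dvd_orbitProd x hn) h)

theorem IsSigmaSimple.eq_of_associated_zpow_apply (hσ : IsSigmaSimple σ) {x : R} (hx : x ≠ 0)
    (hxu : ¬IsUnit x) {k l : ℤ} (h : Associated ((σ ^ k) x) ((σ ^ l) x)) : k = l := by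
  wlog hlk : l ≤ k generalizing k l
  · exact (this h.symm (le_of_not_ge hlk)).symm
  obtain ⟨n, rfl⟩ := Int.le.dest hlk
  rw [zpow_add, zpow_natCast, RingAut.mul_apply] at h
  have hn := h.map (σ ^ l).symm
  simp only [RingEquiv.symm_apply_apply] at hn
  have hn0 : n = 0 := by_contra fun hn0 => hσ.not_associated_pow_apply hx hxu hn0 hn
  simp [hn0]

theorem IsSigmaSimple.not_associated_inv_pow_apply (hσ : IsSigmaSimple σ) {x : R} (hx : x ≠ 0)
    (hxu : ¬IsUnit x) {n : ℕ} (hn : n ≠ 0) : ¬Associated ((σ⁻¹ ^ n) x) x := by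
  intro h
  have h' : Associated ((σ ^ (-(n : ℤ))) x) ((σ ^ (0 : ℤ)) x) := by
    rwa [zpow_zero, RingAut.one_apply, zpow_neg, zpow_natCast, ← inv_pow]
  exact hn (by exact_mod_cast neg_eq_zero.1 (hσ.eq_of_associated_zpow_apply hx hxu h'))

end Domain

section PID

variable {R : Type*} [CommRing R] [IsDomain R] [IsPrincipalIdealRing R] {σ : R ≃+* R}

theorem exists_prime_dvd_of_not_isCoprime (hR : ¬IsField R) {x y : R} (h : ¬IsCoprime x y) :
    ∃ π : R, Prime π ∧ π ∣ x ∧ π ∣ y := by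
  rw [← span_pair_eq_top_iff_isCoprime] at h
  obtain ⟨M, hM, hle⟩ := Ideal.exists_le_maximal _ h
  have hM0 : M ≠ ⊥ := fun h => hR (Ring.isField_iff_maximal_bot.2 (h ▸ hM))
  refine ⟨_, Submodule.IsPrincipal.prime_generator_of_isPrime M hM0, ?_⟩
  simp only [← Ideal.mem_span_singleton, Ideal.span_singleton_generator]
  exact ⟨hle (Ideal.subset_span (by simp)), hle (Ideal.subset_span (by simp))⟩

theorem IsSigmaSimple.pow_ne_one (hσ : IsSigmaSimple σ) (hR : ¬IsField R) {n : ℕ} (hn : 1 ≤ n) :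
    σ ^ n ≠ 1 := by
  intro h
  obtain ⟨π, hπ, -⟩ := exists_prime_dvd_of_not_isCoprime hR (not_isCoprime_zero_zero (R := R))
  refine hσ.not_associated_pow_apply hπ.ne_zero hπ.not_isUnit (n := n) (by omega) ?_
  rw [h, RingAut.one_apply]

theorem IsSigmaSimple.isCoprime_pow_apply (hσ : IsSigmaSimple σ) (hR : ¬IsField R)
    {a : R} (h : ∀ p r : R, a = p * r → ∀ I : Ideal R, PQInvariant σ p (σ r) I → I = ⊥ ∨ I = ⊤)
    {n : ℕ} (hn : 1 ≤ n) : IsCoprime a ((σ ^ n) a) := by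
  by_contra hcop
  obtain ⟨π, hπ, ⟨s, rfl⟩, hπa⟩ := exists_prime_dvd_of_not_isCoprime hR hcop
  set π' := (σ⁻¹ ^ n) π
  have hπ' : Prime π' := (MulEquiv.prime_iff _).2 hπ
  have hπ's : π' ∣ s := by
    refine (hπ'.dvd_or_dvd ?_).resolve_left fun hdvd =>
      hσ.not_associated_inv_pow_apply hπ.ne_zero hπ.not_isUnit (n := n) (by omega)
        (hπ'.associated_of_dvd hπ hdvd)
    have hcancel : (σ⁻¹ ^ n) ((σ ^ n) (π * s)) = π * s := by
      rw [← RingAut.mul_apply, inv_pow, inv_mul_cancel, RingAut.one_apply]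
    simpa only [hcancel] using map_dvd (σ⁻¹ ^ n) hπa
  obtain ⟨w, rfl⟩ := hπ's
  set c := orbitProd σ⁻¹ π n
  have hinv : σ⁻¹ c * π = c * π' := map_orbitProd_mul σ⁻¹ π n
  have hinv' : σ c * σ π' = c * σ π := by
    simpa [mul_comm] using (congrArg σ hinv).symm
  have hI : PQInvariant σ π (σ (π' * w)) (Ideal.span {c}) :=
    pqInvariant_span_singleton ⟨π', hinv⟩
      ⟨σ π * σ w, by rw [map_mul, ← mul_assoc, hinv', mul_assoc]⟩
  rcases h π (π' * w) rfl _ hI with h | h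
  · exact orbitProd_ne_zero hπ.ne_zero n (Ideal.span_singleton_eq_bot.1 h)
  · exact hπ.not_isUnit (isUnit_of_dvd_unit (dvd_orbitProd π (by omega))
      (Ideal.span_singleton_eq_top.1 h))

theorem IsSigmaSimple.exists_zpow_dvd_of_dvd (hσ : IsSigmaSimple σ) {π d p q : R}
    (hπ : Prime π) (hd : d ≠ 0) (hπd : π ∣ d) (hp : d ∣ σ⁻¹ d * p) (hq : d ∣ σ d * q) :
    ∃ j k : ℤ, k ≤ j ∧ (σ ^ j) π ∣ p ∧ (σ ^ k) π ∣ q := by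
  have hprime : ∀ k : ℤ, Prime ((σ ^ k) π) := fun k => (MulEquiv.prime_iff _).2 hπ
  set S := {k : ℤ | (σ ^ k) π ∣ d}
  have hS : S.Finite := finite_setOf_dvd_of_associated_injective (fun k => (hprime k).irreducible)
    (fun k l => hσ.eq_of_associated_zpow_apply hπ.ne_zero hπ.not_isUnit) hd
  have h0 : (0 : ℤ) ∈ S := by simpa [S] using hπd
  obtain ⟨j, hj, hjmax⟩ := S.exists_max_image id hS ⟨0, h0⟩
  obtain ⟨k, hk, hkmin⟩ := S.exists_min_image id hS ⟨0, h0⟩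
  refine ⟨j, k, hkmin j hj, ((hprime j).dvd_or_dvd (hj.trans hp)).resolve_left fun h => ?_,
    ((hprime k).dvd_or_dvd (hk.trans hq)).resolve_left fun h => ?_⟩
  · have : 1 + j ∈ S := by
      simpa [S, zpow_add, RingAut.mul_apply] using map_dvd σ h
    exact absurd (hjmax _ this) (by simp)
  · have : -1 + k ∈ S := by
      simpa [S, zpow_add, RingAut.mul_apply] using map_dvd σ⁻¹ h
    exact absurd (hkmin _ this) (by simp)

theorem IsSigmaSimple.pqInvariant_eq_bot_or_top (hσ : IsSigmaSimple σ) {a p r : R}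
    (hcop : ∀ n : ℕ, 1 ≤ n → IsCoprime a ((σ ^ n) a)) (hpr : a = p * r) {I : Ideal R}
    (hI : PQInvariant σ p (σ r) I) : I = ⊥ ∨ I = ⊤ := by
  obtain ⟨d, rfl⟩ := (IsPrincipalIdealRing.principal I).principal
  have hdI := hI d (Ideal.mem_span_singleton_self d)
  simp only [Ideal.submodule_span_eq, Ideal.mem_span_singleton] at hdI
  simp only [Ideal.submodule_span_eq, Ideal.span_singleton_eq_bot, Ideal.span_singleton_eq_top]
  by_contra! hd
  obtain ⟨π, hπ, hπd⟩ := WfDvdMonoid.exists_irreducible_factor hd.2 hd.1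
  obtain ⟨j, k, hkj, hjp, hkr⟩ :=
    hσ.exists_zpow_dvd_of_dvd hπ.prime hd.1 hπd hdI.1 hdI.2
  obtain ⟨n, hn⟩ := Int.eq_ofNat_of_zero_le (sub_nonneg.2 hkj)
  have hja : (σ ^ j) π ∣ a := hpr ▸ hjp.mul_right r
  have hjσa : (σ ^ j) π ∣ (σ ^ (n + 1)) a := by
    have hπj : (σ ^ n) ((σ ^ k) π) = (σ ^ j) π := by
      rw [← RingAut.mul_apply, ← zpow_natCast, ← zpow_add, ← hn, sub_add_cancel]
    have hσr : (σ ^ n) (σ r) = (σ ^ (n + 1)) r := by rw [pow_succ, RingAut.mul_apply]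
    have hrj := map_dvd (σ ^ n) hkr
    rw [hπj, hσr] at hrj
    exact hrj.trans (map_dvd _ (hpr ▸ dvd_mul_left r p))
  exact hπ.not_isUnit <| (isUnit_map_iff (σ ^ j) π).1 <|
    (hcop (n + 1) (by omega)).isUnit_of_dvd' hja hjσa

end PID

theorem stmt_1_general {R : Type*} [CommRing R] [IsDomain R] [IsPrincipalIdealRing R]
    (σ : R ≃+* R) (a : R) :
    (∀ p r : R, a = p * r → ∀ I : Ideal R, PQInvariant σ p (σ r) I → I = ⊥ ∨ I = ⊤) ↔
      (IsField R ∨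
        ((∀ n : ℕ, 1 ≤ n → σ ^ n ≠ 1) ∧
          (∀ I : Ideal R, Ideal.map (σ : R →+* R) I = I → I = ⊥ ∨ I = ⊤) ∧
          (∀ n : ℕ, 1 ≤ n → Ideal.span {a, (σ ^ n) a} = (⊤ : Ideal R)))) := by
  simp only [span_pair_eq_top_iff_isCoprime]
  constructor
  · intro h
    refine or_iff_not_imp_left.2 fun hR => ?_
    have hσ : IsSigmaSimple σ := fun I hI =>
      h a 1 (mul_one a).symm I (pqInvariant_of_map_eq hI _ _)
    exact ⟨fun n hn => hσ.pow_ne_one hR hn, hσ,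
      fun n hn => hσ.isCoprime_pow_apply hR h hn⟩
  · rintro (hR | ⟨-, hσ, hcop⟩) p r hpr I hI
    · let := hR.toField
      exact Ideal.eq_bot_or_top I
    · exact IsSigmaSimple.pqInvariant_eq_bot_or_top hσ hcop hpr hI

/-- Over a PID `R` with automorphism `σ` and `0 ≠ a ∈ R`, every rank-one
`R`-free module `V_p` (for `p ∣ a`, `q = σ(a/p)`) is simple iff either `R` is a field or
Bavula's simplicity criterion for the GWA `R(σ,a)` holds. -/
theorem stmt_1 {R : Type*} [CommRing R] [IsDomain R] [IsPrincipalIdealRing R]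
    (σ : R ≃+* R) (a : R) (ha : a ≠ 0) :
    (∀ p r : R, a = p * r → ∀ I : Ideal R, PQInvariant σ p (σ r) I → I = ⊥ ∨ I = ⊤) ↔
      (IsField R ∨
        ((∀ n : ℕ, 1 ≤ n → σ ^ n ≠ 1) ∧
          (∀ I : Ideal R, Ideal.map (σ : R →+* R) I = I → I = ⊥ ∨ I = ⊤) ∧
          (∀ n : ℕ, 1 ≤ n → Ideal.span {a, (σ ^ n) a} = (⊤ : Ideal R)))) :=
  stmt_1_general σ a
end

section
/- Let R be a principal ideal domain with a ring automorphism σ such that for every irreducible z ∈ R and every n ≥ 1, σ^n(z) is not an associate of z. Let p, q ∈ R be nonzero, and let N be the cardinality (counted with multiplicity) of the multiset of pairs (z, w), where z runs over the multiset of irreducible factors of q and w runs over the multiset of irreducible factors of p, such that w is an associate of σ^n(z) for some n ≥ 0. Then every strictly increasing chain I₀ ⊊ I₁ ⊊ ⋯ ⊊ I_m of (p,q)-invariant ideals of R satisfies m ≤ 1 + N. -/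
/-!
Write `v_z(x)` for the number of irreducible factors of `x` associated to `z`. If `(g)` is
`(p,q)`-invariant, then `v_z(g) ≤ v_{σ z}(g) + v_z(p)` and `v_z(g) ≤ v_{σ⁻¹ z}(g) + v_z(q)`: along
a `σ`-orbit the exponents of `g` can drop by at most `v(p)` per step to the right and by at most
`v(q)` per step to the left. A pyramid is the smallest profile of this kind: it starts at a height
`α ≤ v_x(q)` at a factor `x` of `q`, ends at a height `β ≤ v_y(p)` at a factor `y ∼ σⁿ x` of `p`,
and in between it is the minimum of the two ramps. The potential of `g` counts the pyramids lying
under the exponent profile of `g`; there are at most `N` of them.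

If `(g) ⊊ (g')` are invariant and nonzero, pick `z` with `v_z(g') < v_z(g)`. Walking away from `z`
on both sides until the exponents of `q`, resp. `p`, add up to `v_z(g)` (this terminates because
orbits are infinite and `g` has finitely many factors) gives a pyramid under `g` whose height at
`z` is `v_z(g)`, so it is not under `g'`. Hence the potential strictly decreases along a chain of
invariant ideals, all of which except possibly `I₀` are nonzero.
-/

namespace Multiset

variable {α β γ δ : Type*}

theorem count_product [DecidableEq α] [DecidableEq β] (s : Multiset α) (t : Multiset β)
    (a : α) (b : β) : count (a, b) (s ×ˢ t) = count a s * count b t := by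
  induction s using Multiset.induction_on with
  | empty => simp
  | cons x s ih =>
    rw [cons_product, count_add, ih, count_cons, add_mul, add_comm]
    by_cases h : a = x
    · subst h
      simp [count_map_eq_count' _ _ (Prod.mk_right_injective a)]
    · simp [h, count_map]

theorem map_prodMap_product (f : α → γ) (g : β → δ) (s : Multiset α) (t : Multiset β) :
    (s ×ˢ t).map (Prod.map f g) = s.map f ×ˢ t.map g := by
  induction s using Multiset.induction_on with
  | empty => simp
  | cons a s ih => simp [cons_product, ih, map_map]

end Multiset

namespace UniqueFactorizationMonoid

variable {α β : Type*} [CommMonoidWithZero α] [UniqueFactorizationMonoid α]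
  [CommMonoidWithZero β] [UniqueFactorizationMonoid β]

open scoped Classical in
noncomputable def factorCount (z x : α) : ℕ :=
  ((factors x).map Associates.mk).count (Associates.mk z)

open scoped Classical in
noncomputable def factorClasses (x : α) : Finset (Associates α) :=
  ((factors x).map Associates.mk).toFinset

theorem factorCount_congr {z z' : α} (h : Associated z z') (x : α) :
    factorCount z x = factorCount z' x := by
  rw [factorCount, factorCount, Associates.mk_eq_mk_iff_associated.mpr h]

theorem factorCount_pos_iff {z x : α} : 0 < factorCount z x ↔ ∃ u ∈ factors x, Associated u z := by
  simp [factorCount, Multiset.count_pos, Associates.mk_eq_mk_iff_associated]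

theorem mk_mem_factorClasses_iff {z x : α} :
    Associates.mk z ∈ factorClasses x ↔ 0 < factorCount z x := by
  simp [factorClasses, factorCount, Multiset.count_pos]

theorem dvd_of_factorCount_pos {z x : α} (h : 0 < factorCount z x) : z ∣ x := by
  obtain ⟨u, hu, huz⟩ := factorCount_pos_iff.mp h
  exact huz.symm.dvd.trans (dvd_of_mem_factors hu)

theorem factorCount_mul {x y : α} (hx : x ≠ 0) (hy : y ≠ 0) (z : α) :
    factorCount z (x * y) = factorCount z x + factorCount z y := by
  simp only [factorCount, Associates.rel_associated_iff_map_eq_map.mp (factors_mul hx hy),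
    Multiset.map_add, Multiset.count_add]

theorem factorCount_le_of_dvd {x y : α} (hy : y ≠ 0) (h : x ∣ y) (z : α) :
    factorCount z x ≤ factorCount z y := by
  obtain ⟨c, rfl⟩ := h
  rw [factorCount_mul (left_ne_zero_of_mul hy) (right_ne_zero_of_mul hy)]
  exact Nat.le_add_right _ _

theorem exists_factorCount_lt_of_dvdNotUnit {x y : α} (hy : y ≠ 0) (h : DvdNotUnit x y) :
    ∃ z, Irreducible z ∧ factorCount z x < factorCount z y := by
  obtain ⟨hx, c, hc, rfl⟩ := h
  have hc0 := right_ne_zero_of_mul hy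
  obtain ⟨z, hz⟩ := exists_mem_factors hc0 hc
  have hzc : 0 < factorCount z c := factorCount_pos_iff.mpr ⟨z, hz, .refl z⟩
  refine ⟨z, irreducible_of_factor z hz, ?_⟩
  rw [factorCount_mul hx hc0]
  omega

theorem factorCount_map (e : α ≃* β) {x : α} (hx : x ≠ 0) (z : β) :
    factorCount z (e x) = factorCount (e.symm z) x := by
  classical
  have hrel : Multiset.Rel Associated (factors (e x)) ((factors x).map e) := by
    refine factors_unique irreducible_of_factor ?_ ?_
    · simpa using fun u hu => (irreducible_of_factor u hu).map e
    · rw [← map_multiset_prod]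
      exact (factors_prod (by simpa using hx)).trans ((factors_prod hx).map e).symm
  rw [factorCount, Associates.rel_associated_iff_map_eq_map.mp hrel, Multiset.map_map,
    factorCount, Multiset.count_map, Multiset.count_map]
  congr 1
  refine Multiset.filter_congr fun u _ => ?_
  simp only [Function.comp_apply, Associates.mk_eq_mk_iff_associated]
  exact ⟨fun h => by simpa using h.map e.symm, fun h => by simpa using h.map e⟩

end UniqueFactorizationMonoid

namespace PQInvariant

open Finset UniqueFactorizationMonoid

/-- Height at `k` of the pyramid on `[0, n]` with feet of heights `α` at `0` and `β` at `n`. -/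
def pyramid (Q P : ℕ → ℕ) (n α β k : ℕ) : ℕ :=
  min (α + ∑ t ∈ Ioc 0 k, Q t) (β + ∑ t ∈ Ico k n, P t)

theorem le_add_sum_range_of_le_succ {b c : ℕ → ℕ} (hstep : ∀ k, b k ≤ b (k + 1) + c k) (k : ℕ) :
    b 0 ≤ b k + ∑ t ∈ range k, c t := by
  induction k with
  | zero => simp
  | succ k ih => rw [sum_range_succ]; linarith [hstep k]

theorem exists_ramp {b c : ℕ → ℕ} (hstep : ∀ k, b k ≤ b (k + 1) + c k) (hzero : ∃ k, b k = 0)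
    (hpos : 0 < b 0) :
    ∃ i α, 0 < α ∧ α ≤ c i ∧ α + ∑ t ∈ range i, c t = b 0 ∧
      ∀ k ≤ i, α + ∑ t ∈ Ico k i, c t ≤ b k := by
  classical
  have hreach : ∃ i, b 0 ≤ ∑ t ∈ range (i + 1), c t := by
    obtain ⟨_ | i, hi⟩ := hzero
    · omega
    · exact ⟨i, by simpa [hi] using le_add_sum_range_of_le_succ hstep (i + 1)⟩
  obtain ⟨i, hi, hmin⟩ : ∃ i, b 0 ≤ ∑ t ∈ range (i + 1), c t ∧ ∑ t ∈ range i, c t < b 0 := by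
    refine ⟨Nat.find hreach, Nat.find_spec hreach, ?_⟩
    cases h : Nat.find hreach with
    | zero => simpa using hpos
    | succ i => exact not_le.mp (Nat.find_min hreach (by omega : i < Nat.find hreach))
  rw [sum_range_succ] at hi
  refine ⟨i, b 0 - ∑ t ∈ range i, c t, by omega, by omega, by omega, fun k hk => ?_⟩
  have := le_add_sum_range_of_le_succ hstep k
  have := sum_range_add_sum_Ico c hk
  omega

theorem sum_Ioc_intCast_sub {M : Type*} [AddCommMonoid M] (f : ℤ → M) {i k : ℕ} (hk : k ≤ i) :
    ∑ t ∈ Ioc 0 k, f (t - i) = ∑ t ∈ Ico (i - k) i, f (-t) := by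
  rw [← Finset.Ico_add_one_add_one_eq_Ioc, zero_add]
  have := sum_Ico_reflect (fun t => f (-t)) 1 (show k + 1 ≤ i + 1 by omega)
  rw [show i + 1 - (k + 1) = i - k by omega, Nat.add_sub_cancel] at this
  rw [← this]
  refine sum_congr rfl fun t ht => ?_
  rw [mem_Ico] at ht
  push_cast [show t ≤ i by omega]
  ring_nf

theorem sum_Ico_intCast_sub {M : Type*} [AddCommMonoid M] (f : ℤ → M) {i k : ℕ} (j : ℕ)
    (hk : i ≤ k) : ∑ t ∈ Ico k (i + j), f (t - i) = ∑ t ∈ Ico (k - i) j, f t := by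
  have := sum_Ico_add' (fun t : ℕ => f (t - i)) (k - i) j i
  rw [Nat.sub_add_cancel hk, add_comm j] at this
  rw [← this]
  simp

theorem exists_pyramid_le {a P Q : ℤ → ℕ} (hP : ∀ t, a t ≤ a (t + 1) + P t)
    (hQ : ∀ t, a t ≤ a (t - 1) + Q t) (hright : ∃ k : ℕ, a k = 0)
    (hleft : ∃ k : ℕ, a (-k) = 0) (hpos : 0 < a 0) :
    ∃ i j α β : ℕ, 0 < α ∧ α ≤ Q (-i) ∧ 0 < β ∧ β ≤ P j ∧
      pyramid (fun t => Q (t - i)) (fun t => P (t - i)) (i + j) α β i = a 0 ∧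
      ∀ k ≤ i + j, pyramid (fun t => Q (t - i)) (fun t => P (t - i)) (i + j) α β k ≤ a (k - i) := by
  obtain ⟨i, α, hα, hαQ, hαsum, hαle⟩ :=
    exists_ramp (b := fun k => a (-k)) (c := fun k => Q (-k))
      (fun k => by simpa [sub_eq_add_neg, add_comm] using hQ (-k)) hleft hpos
  simp only [Nat.cast_zero, neg_zero] at hαsum
  obtain ⟨j, β, hβ, hβP, hβsum, hβle⟩ :=
    exists_ramp (b := fun k => a k) (c := fun k => P k) (fun k => by simpa using hP k) hright hpos
  simp only [Nat.cast_zero] at hβsum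
  refine ⟨i, j, α, β, hα, hαQ, hβ, hβP, ?_, fun k hk => ?_⟩
  · simp only [pyramid]
    rw [sum_Ioc_intCast_sub Q le_rfl, sum_Ico_intCast_sub P j le_rfl, Nat.sub_self,
      ← range_eq_Ico, ← range_eq_Ico, hαsum, hβsum, min_self]
  · rcases le_total k i with hki | hik
    · refine (min_le_left _ _).trans ?_
      rw [sum_Ioc_intCast_sub Q hki]
      calc α + ∑ t ∈ Ico (i - k) i, Q (-t) ≤ a (-(i - k : ℕ)) := hαle (i - k) (by omega)
        _ = a (k - i) := by rw [Nat.cast_sub hki, neg_sub]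
    · refine (min_le_right _ _).trans ?_
      rw [sum_Ico_intCast_sub P j hik]
      calc β + ∑ t ∈ Ico (k - i) j, P t ≤ a (k - i : ℕ) := hβle (k - i) (by omega)
        _ = a (k - i) := by rw [Nat.cast_sub hik]

section Orbit

variable {R : Type*} [CommRing R] (σ : R ≃+* R)

def HasInfiniteOrbits : Prop :=
  ∀ z : R, Irreducible z → ∀ m : ℕ, 1 ≤ m → ¬ Associated ((σ ^ m) z) z

theorem zpow_apply_zpow_apply (a b : ℤ) (x : R) : (σ ^ a) ((σ ^ b) x) = (σ ^ (a + b)) x := by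
  rw [zpow_add, RingAut.mul_apply]

theorem associates_mk_zpow_injective (horb : HasInfiniteOrbits σ) {z : R} (hz : Irreducible z) :
    Function.Injective fun t : ℤ => Associates.mk ((σ ^ t) z) := by
  have hlt : ∀ a b : ℤ, a < b → ¬ Associated ((σ ^ a) z) ((σ ^ b) z) := by
    intro a b hab h
    obtain ⟨m, rfl⟩ : ∃ m : ℕ, b = a + (m + 1 : ℕ) := ⟨(b - a - 1).toNat, by omega⟩
    apply horb z hz (m + 1) (by omega)
    have h' := h.map (σ ^ (-a))
    rw [zpow_apply_zpow_apply, zpow_apply_zpow_apply, neg_add_cancel, zpow_zero, RingAut.one_apply,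
      neg_add_cancel_left, zpow_natCast] at h'
    exact h'.symm
  intro a b h
  simp only [Associates.mk_eq_mk_iff_associated] at h
  rcases lt_trichotomy a b with hab | rfl | hab
  · exact absurd h (hlt a b hab)
  · rfl
  · exact absurd h.symm (hlt b a hab)

variable [UniqueFactorizationMonoid R]

theorem finite_setOf_zpow_dvd (horb : HasInfiniteOrbits σ) {z x : R} (hz : Irreducible z)
    (hx : x ≠ 0) : {t : ℤ | (σ ^ t) z ∣ x}.Finite := by
  refine Set.Finite.of_injOn (f := fun t : ℤ => Associates.mk ((σ ^ t) z)) (t := factorClasses x)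
    (fun t ht => ?_) (associates_mk_zpow_injective σ horb hz).injOn (Finset.finite_toSet _)
  obtain ⟨u, hu, hzu⟩ := exists_mem_factors_of_dvd hx (hz.map (σ ^ t)) ht
  exact mk_mem_factorClasses_iff.mpr (factorCount_pos_iff.mpr ⟨u, hu, hzu.symm⟩)

theorem exists_factorCount_zpow_eq_zero (horb : HasInfiniteOrbits σ) {z x : R}
    (hz : Irreducible z) (hx : x ≠ 0) {f : ℕ → ℤ} (hf : Function.Injective f) :
    ∃ k, factorCount ((σ ^ f k) z) x = 0 := by
  by_contra! h
  exact Set.infinite_of_injective_forall_mem hf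
    (fun k => dvd_of_factorCount_pos (Nat.pos_of_ne_zero (h k)))
    (finite_setOf_zpow_dvd σ horb hz hx)

variable (p q : R)

noncomputable def orbitCount (w x : R) (k : ℕ) : ℕ := factorCount ((σ ^ k) x) w

def IsPyramidUnder (g x y : R) (α β : ℕ) : Prop :=
  ∃ n : ℕ, Associated ((σ ^ n) x) y ∧
    ∀ k ≤ n, pyramid (orbitCount σ q x) (orbitCount σ p x) n α β k ≤ orbitCount σ g x k

open scoped Classical in
noncomputable def pyramidCount (g x y : R) : ℕ :=
  #{ab ∈ Icc 1 (factorCount x q) ×ˢ Icc 1 (factorCount y p) | IsPyramidUnder σ p q g x y ab.1 ab.2}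

/-- Indexed by associate classes, so that associated factors of `q` (resp. `p`) are not told apart;
their multiplicity is accounted for by the range of `α` (resp. `β`). -/
noncomputable def potential (g : R) : ℕ :=
  ∑ XY ∈ factorClasses q ×ˢ factorClasses p, pyramidCount σ p q g (Quot.out XY.1) (Quot.out XY.2)

variable {σ p q} {g : R}

theorem orbitCount_zpow_neg (w z : R) (s : ℤ) :
    orbitCount σ w ((σ ^ (-s)) z) = fun k : ℕ => factorCount ((σ ^ ((k : ℤ) - s)) z) w := by
  ext k
  rw [orbitCount, ← zpow_natCast, zpow_apply_zpow_apply, sub_eq_add_neg]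

theorem orbitCount_congr {x x' : R} (h : Associated x x') (w : R) :
    orbitCount σ w x = orbitCount σ w x' :=
  funext fun k => factorCount_congr (h.map (σ ^ k)) w

theorem IsPyramidUnder.of_associated {x x' y y' : R} {α β : ℕ}
    (hpyr : IsPyramidUnder σ p q g x y α β) (hx : Associated x x') (hy : Associated y y') :
    IsPyramidUnder σ p q g x' y' α β := by
  obtain ⟨n, hn, hle⟩ := hpyr
  refine ⟨n, ((hx.map (σ ^ n)).symm.trans hn).trans hy, ?_⟩
  simpa only [← orbitCount_congr hx] using hle

theorem IsPyramidUnder.mono {g' x y : R} {α β : ℕ} (hpyr : IsPyramidUnder σ p q g' x y α β)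
    (hg : g ≠ 0) (h : g' ∣ g) : IsPyramidUnder σ p q g x y α β := by
  obtain ⟨n, hn, hle⟩ := hpyr
  exact ⟨n, hn, fun k hk => (hle k hk).trans (factorCount_le_of_dvd hg h _)⟩

theorem pyramidCount_mono {g' : R} (hg : g ≠ 0) (h : g' ∣ g) (x y : R) :
    pyramidCount σ p q g' x y ≤ pyramidCount σ p q g x y := by
  classical
  exact card_le_card (monotone_filter_right _ fun _ _ hpyr => hpyr.mono hg h)

open scoped Classical in
theorem potential_le (g : R) :
    potential σ p q g ≤ Multiset.card ((factors q ×ˢ factors p).filter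
      fun zw => ∃ n : ℕ, Associated ((σ ^ n) zw.1) zw.2) := by
  set S := (factors q).map Associates.mk
  set T := (factors p).map Associates.mk
  let P' (XY : Associates R × Associates R) : Prop :=
    ∃ n : ℕ, Associated ((σ ^ n) (Quot.out XY.1)) (Quot.out XY.2)
  calc potential σ p q g
      ≤ ∑ XY ∈ S.toFinset ×ˢ T.toFinset, if P' XY then S.count XY.1 * T.count XY.2 else 0 := by
        refine sum_le_sum fun XY _ => ?_
        split_ifs with hXY
        · refine (card_filter_le _ _).trans_eq ?_
          simp [S, T, factorCount, Associates.quot_out]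
        · refine (card_eq_zero.mpr (filter_eq_empty_iff.mpr fun ab _ hpyr => hXY ?_)).le
          obtain ⟨n, hn, -⟩ := hpyr
          exact ⟨n, hn⟩
    _ = Multiset.card ((S ×ˢ T).filter P') := by
        rw [← Multiset.sum_count_eq_card (s := S.toFinset ×ˢ T.toFinset)
          (fun XY h => by simpa using Multiset.mem_product.mp (Multiset.mem_of_mem_filter h))]
        refine sum_congr rfl fun XY _ => ?_
        rw [Multiset.count_filter, Multiset.count_product]
    _ = _ := by
        rw [← Multiset.map_prodMap_product, Multiset.filter_map, Multiset.card_map]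
        congr 1
        refine Multiset.filter_congr fun zw _ => exists_congr fun n => ?_
        have hz := (Associates.mk_quot_out zw.1).map (σ ^ n)
        have hw := Associates.mk_quot_out zw.2
        exact ⟨fun h => (hz.symm.trans h).trans hw, fun h => (hz.trans h).trans hw.symm⟩

variable [IsDomain R]

theorem factorCount_le (hinv : PQInvariant σ p q (Ideal.span {g})) (hp : p ≠ 0) (hq : q ≠ 0)
    (hg : g ≠ 0) (z : R) :
    factorCount z g ≤ factorCount (σ z) g + factorCount z p ∧
      factorCount z g ≤ factorCount (σ.symm z) g + factorCount z q := by
  obtain ⟨hgp, hgq⟩ := hinv g (Ideal.mem_span_singleton_self g)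
  rw [Ideal.mem_span_singleton] at hgp hgq
  have hσg : σ g ≠ 0 := by simpa using hg
  have hσg' : σ.symm g ≠ 0 := by simpa using hg
  constructor
  · have := factorCount_le_of_dvd (mul_ne_zero hσg' hp) hgp z
    rwa [factorCount_mul hσg' hp, ← RingEquiv.coe_toMulEquiv, factorCount_map _ hg] at this
  · have := factorCount_le_of_dvd (mul_ne_zero hσg hq) hgq z
    rwa [factorCount_mul hσg hq, ← RingEquiv.coe_toMulEquiv, factorCount_map _ hg] at this

theorem exists_isPyramidUnder_not_isPyramidUnder (horb : HasInfiniteOrbits σ)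
    (hp : p ≠ 0) (hq : q ≠ 0) (hg : g ≠ 0) (hinv : PQInvariant σ p q (Ideal.span {g}))
    {g' z : R} (hz : Irreducible z) (hlt : factorCount z g' < factorCount z g) :
    ∃ x y α β, 0 < α ∧ α ≤ factorCount x q ∧ 0 < β ∧ β ≤ factorCount y p ∧
      IsPyramidUnder σ p q g x y α β ∧ ¬ IsPyramidUnder σ p q g' x y α β := by
  let A (w : R) (t : ℤ) : ℕ := factorCount ((σ ^ t) z) w
  have hA0 (w : R) : A w 0 = factorCount z w := by simp [A]
  obtain ⟨i, j, α, β, hα, hαq, hβ, hβp, hpeak, hle⟩ :=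
    exists_pyramid_le (a := A g) (P := A p) (Q := A q)
      (fun t => by
        simpa only [A, add_comm t, ← zpow_apply_zpow_apply, zpow_one]
          using (factorCount_le hinv hp hq hg ((σ ^ t) z)).1)
      (fun t => by
        simpa only [A, sub_eq_neg_add, ← zpow_apply_zpow_apply, zpow_neg_one, RingAut.inv_apply]
          using (factorCount_le hinv hp hq hg ((σ ^ t) z)).2)
      (exists_factorCount_zpow_eq_zero σ horb hz hg Nat.cast_injective)
      (exists_factorCount_zpow_eq_zero σ horb hz hg (neg_injective.comp Nat.cast_injective))
      (by rw [hA0]; omega)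
  -- Position `k` on the orbit of `x = σ^(-i) z` is position `k - i` on the orbit of `z`.
  refine ⟨(σ ^ (-(i : ℤ))) z, (σ ^ (j : ℤ)) z, α, β, hα, hαq, hβ, hβp,
    ⟨i + j, .of_eq ?_, by simp only [orbitCount_zpow_neg]; exact hle⟩, ?_⟩
  · rw [← zpow_natCast, zpow_apply_zpow_apply, Nat.cast_add, add_neg_cancel_comm]
  rintro ⟨n, hn, hle'⟩
  have hn : n = i + j := by
    rw [← zpow_natCast, zpow_apply_zpow_apply, ← Associates.mk_eq_mk_iff_associated] at hn
    have := associates_mk_zpow_injective σ horb hz (a₁ := n + -i) (a₂ := j) hn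
    omega
  subst hn
  have := hle' i (by omega)
  simp only [orbitCount_zpow_neg, sub_self, zpow_zero, RingAut.one_apply] at this
  rw [hpeak, hA0] at this
  omega

theorem potential_lt (horb : HasInfiniteOrbits σ) (hp : p ≠ 0) (hq : q ≠ 0) {g' : R}
    (hg : g ≠ 0) (h : DvdNotUnit g' g) (hinv : PQInvariant σ p q (Ideal.span {g})) :
    potential σ p q g' < potential σ p q g := by
  classical
  have hdvd : g' ∣ g := let ⟨_, c, _, hc⟩ := h; ⟨c, hc⟩
  obtain ⟨z, hz, hlt⟩ := exists_factorCount_lt_of_dvdNotUnit hg h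
  obtain ⟨x, y, α, β, hα, hαx, hβ, hβy, hpyr, hnot⟩ :=
    exists_isPyramidUnder_not_isPyramidUnder horb hp hq hg hinv hz hlt
  have hx : Associated (Quot.out (Associates.mk x)) x := Associates.mk_quot_out x
  have hy : Associated (Quot.out (Associates.mk y)) y := Associates.mk_quot_out y
  have hXY : (Associates.mk x, Associates.mk y) ∈ factorClasses q ×ˢ factorClasses p :=
    mem_product.mpr ⟨mk_mem_factorClasses_iff.mpr (hα.trans_le hαx),
      mk_mem_factorClasses_iff.mpr (hβ.trans_le hβy)⟩
  refine sum_lt_sum (fun _ _ => pyramidCount_mono hg hdvd _ _) ⟨_, hXY, ?_⟩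
  refine card_lt_card ((ssubset_iff_of_subset (monotone_filter_right _
    fun _ _ hpyr => hpyr.mono hg hdvd)).mpr ⟨(α, β), ?_, fun hmem => hnot ?_⟩)
  · rw [mem_filter, mem_product, mem_Icc, mem_Icc, factorCount_congr hx, factorCount_congr hy]
    exact ⟨⟨⟨hα, hαx⟩, hβ, hβy⟩, hpyr.of_associated hx.symm hy.symm⟩
  · exact (mem_filter.mp hmem).2.of_associated hx hy

end Orbit

theorem potential_generator_lt {R : Type*} [CommRing R] [IsDomain R] [IsPrincipalIdealRing R]
    {σ : R ≃+* R} {p q : R} (horb : HasInfiniteOrbits σ)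
    (hp : p ≠ 0) (hq : q ≠ 0) {I J : Ideal R} (hIJ : I < J) (hI : I ≠ ⊥)
    (hinv : PQInvariant σ p q I) :
    potential σ p q (Submodule.IsPrincipal.generator J) <
      potential σ p q (Submodule.IsPrincipal.generator I) := by
  rw [← Ideal.span_singleton_generator I, ← Ideal.span_singleton_generator J,
    Ideal.span_singleton_lt_span_singleton] at hIJ
  rw [← Ideal.span_singleton_generator I] at hinv
  exact potential_lt horb hp hq
    (mt (Submodule.IsPrincipal.eq_bot_iff_generator_eq_zero I).mpr hI) hIJ hinv

end PQInvariant

open UniqueFactorizationMonoid in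
open scoped Classical in
/-- Over a PID with all `σ`-orbits of irreducibles infinite, the length
of the rank-one `R`-free module `V_p` is at most `1 + N`, where `N` counts (with
multiplicity) the pairs `(z,w)` of irreducible factors of `q` and `p` respectively with
`w ∼ σ^n(z)` for some `n ≥ 0`: every strictly increasing chain `I₀ ⊊ ⋯ ⊊ I_m` of
`(p,q)`-invariant ideals has `m ≤ 1 + N`. -/
theorem stmt_2 {R : Type*} [CommRing R] [IsDomain R] [IsPrincipalIdealRing R]
    (σ : R ≃+* R)
    (horb : ∀ z : R, Irreducible z → ∀ m : ℕ, 1 ≤ m → ¬ Associated ((σ ^ m) z) z)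
    (p q : R) (hp : p ≠ 0) (hq : q ≠ 0)
    (N : ℕ)
    (hN : N = Multiset.card ((factors q ×ˢ factors p).filter
      (fun zw => ∃ n : ℕ, Associated ((σ ^ n) zw.1) zw.2)))
    (m : ℕ) (I : Fin (m + 1) → Ideal R)
    (hchain : StrictMono I) (hinv : ∀ j, PQInvariant σ p q (I j)) :
    m ≤ 1 + N := by
  let Φ (j : Fin (m + 1)) : ℕ := PQInvariant.potential σ p q (Submodule.IsPrincipal.generator (I j))
  have hanti : StrictAntiOn Φ (Set.Ioi 0) := fun a ha b _ hab =>
    PQInvariant.potential_generator_lt horb hp hq (hchain hab)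
      (bot_le.trans_lt (hchain (Set.mem_Ioi.mp ha))).ne' (hinv a)
  have hcard := Finset.card_le_card_of_injOn Φ (s := Finset.Ioi 0) (t := Finset.range (N + 1))
    (fun j _ => Finset.mem_range.mpr (Nat.lt_succ_of_le (hN ▸ PQInvariant.potential_le _)))
    (by simpa only [Finset.coe_Ioi] using hanti.injOn)
  simp only [Fin.card_Ioi, Fin.val_zero, Finset.card_range] at hcard
  omega
end

section
/- Let f, P, Q : ℤ → ℕ with f finitely supported. Then the following are equivalent: (i) for every k ∈ ℤ, f(k) − f(k+1) ≤ P(k) and f(k) − f(k−1) ≤ Q(k) (inequalities in ℤ); (ii) there exists a finite multiset M of pairs (a,b) of integers with a ≤ b such that for every k ∈ ℤ, f(k) equals the number of pairs (a,b) ∈ M (with multiplicity) satisfying a ≤ k ≤ b, the number of pairs in M with first coordinate equal to k is at most Q(k), and the number of pairs in M with second coordinate equal to k is at most P(k). -/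
/-!
Every finitely supported `f : ℤ → ℕ` is the interval-count function of a multiset of intervals
in which exactly `(f k - f (k - 1))⁺` intervals start and `(f k - f (k + 1))⁺` intervals end at
`k`: removing a maximal run `[a, b]` of the support of `f` lowers these two jumps only at `a` and
at `b`, so one inducts on `∑ f`. Conversely, for any multiset of intervals, one that covers `k`
but not `k + 1` ends at `k`, and one that covers `k` but not `k - 1` starts at `k`.
-/

open Set

theorem Multiset.card_filter_le_card_filter_add_card_filter {α : Type*} {p q r : α → Prop}
    [DecidablePred p] [DecidablePred q] [DecidablePred r] (s : Multiset α)
    (h : ∀ a, p a → q a ∨ r a) :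
    card (s.filter p) ≤ card (s.filter q) + card (s.filter r) :=
  calc card (s.filter p)
      ≤ card (s.filter fun a => q a ∨ r a) := card_le_card (monotone_filter_right s h)
    _ ≤ card (s.filter q + s.filter r) := by
        rw [filter_add_filter, card_add]
        exact Nat.le_add_right _ _
    _ = card (s.filter q) + card (s.filter r) := card_add _ _

def coverCount (M : Multiset (ℤ × ℤ)) (k : ℤ) : ℕ :=
  Multiset.card (M.filter fun ab => ab.1 ≤ k ∧ k ≤ ab.2)

def leftEndCount (M : Multiset (ℤ × ℤ)) (k : ℤ) : ℕ :=
  Multiset.card (M.filter fun ab => ab.1 = k)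

def rightEndCount (M : Multiset (ℤ × ℤ)) (k : ℤ) : ℕ :=
  Multiset.card (M.filter fun ab => ab.2 = k)

section IntervalCounts

variable (M : Multiset (ℤ × ℤ)) (a b k : ℤ)

theorem coverCount_sub_coverCount_add_one_le :
    coverCount M k - coverCount M (k + 1) ≤ rightEndCount M k := by
  have := M.card_filter_le_card_filter_add_card_filter
    (q := fun ab => ab.1 ≤ k + 1 ∧ k + 1 ≤ ab.2) (r := fun ab => ab.2 = k)
    fun ab (h : ab.1 ≤ k ∧ k ≤ ab.2) => by omega
  unfold coverCount rightEndCount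
  omega

theorem coverCount_sub_coverCount_sub_one_le :
    coverCount M k - coverCount M (k - 1) ≤ leftEndCount M k := by
  have := M.card_filter_le_card_filter_add_card_filter
    (q := fun ab => ab.1 ≤ k - 1 ∧ k - 1 ≤ ab.2) (r := fun ab => ab.1 = k)
    fun ab (h : ab.1 ≤ k ∧ k ≤ ab.2) => by omega
  unfold coverCount leftEndCount
  omega

theorem coverCount_cons :
    coverCount ((a, b) ::ₘ M) k = coverCount M k + (Icc a b).indicator 1 k := by
  simp only [coverCount, ← Multiset.countP_eq_card_filter, Multiset.countP_cons, indicator_apply,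
    mem_Icc, Pi.one_apply]

theorem leftEndCount_cons :
    leftEndCount ((a, b) ::ₘ M) k = leftEndCount M k + if a = k then 1 else 0 := by
  simp only [leftEndCount, ← Multiset.countP_eq_card_filter, Multiset.countP_cons]

theorem rightEndCount_cons :
    rightEndCount ((a, b) ::ₘ M) k = rightEndCount M k + if b = k then 1 else 0 := by
  simp only [rightEndCount, ← Multiset.countP_eq_card_filter, Multiset.countP_cons]

end IntervalCounts

section AddIndicator

variable {g : ℤ → ℕ} {a b : ℤ}

theorem add_indicator_sub_sub_one (hab : a ≤ b) (ha : g (a - 1) = 0) (hb : g (b + 1) = 0)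
    (k : ℤ) :
    g k + (Icc a b).indicator 1 k - (g (k - 1) + (Icc a b).indicator 1 (k - 1)) =
      g k - g (k - 1) + if a = k then 1 else 0 := by
  simp only [indicator_apply, mem_Icc, Pi.one_apply]
  split_ifs <;> grind

theorem add_indicator_sub_add_one (hab : a ≤ b) (ha : g (a - 1) = 0) (hb : g (b + 1) = 0)
    (k : ℤ) :
    g k + (Icc a b).indicator 1 k - (g (k + 1) + (Icc a b).indicator 1 (k + 1)) =
      g k - g (k + 1) + if b = k then 1 else 0 := by
  simp only [indicator_apply, mem_Icc, Pi.one_apply]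
  split_ifs <;> grind

end AddIndicator

def IsIntervalDecomposition (M : Multiset (ℤ × ℤ)) (f : ℤ → ℕ) : Prop :=
  (∀ ab ∈ M, ab.1 ≤ ab.2) ∧ ∀ k, coverCount M k = f k ∧
    leftEndCount M k = f k - f (k - 1) ∧ rightEndCount M k = f k - f (k + 1)

theorem IsIntervalDecomposition.cons {M : Multiset (ℤ × ℤ)} {g : ℤ → ℕ}
    (hM : IsIntervalDecomposition M g) {a b : ℤ} (hab : a ≤ b) (ha : g (a - 1) = 0)
    (hb : g (b + 1) = 0) :
    IsIntervalDecomposition ((a, b) ::ₘ M) (g + (Icc a b).indicator 1) := by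
  refine ⟨Multiset.forall_mem_cons.2 ⟨hab, hM.1⟩, fun k => ?_⟩
  obtain ⟨hcover, hleft, hright⟩ := hM.2 k
  simp only [Pi.add_apply, coverCount_cons, leftEndCount_cons, rightEndCount_cons, hcover,
    hleft, hright, add_indicator_sub_sub_one hab ha hb, add_indicator_sub_add_one hab ha hb,
    and_self]

theorem exists_run_of_ne_zero {f : ℤ → ℕ} (hf : {k | f k ≠ 0}.Finite) {k₀ : ℤ}
    (hk₀ : f k₀ ≠ 0) :
    ∃ a b, a ≤ k₀ ∧ k₀ ≤ b ∧ f (a - 1) = 0 ∧ f (b + 1) = 0 ∧ ∀ k ∈ Icc a b, f k ≠ 0 := by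
  obtain ⟨lo, hlo⟩ := hf.bddBelow
  obtain ⟨hi, hhi⟩ := hf.bddAbove
  obtain ⟨a', ⟨ha'k₀, ha'⟩, ha'max⟩ := Int.exists_greatest_of_bdd
    (P := fun k => k < k₀ ∧ f k = 0) ⟨k₀, fun _ hk => hk.1.le⟩
    ⟨min lo k₀ - 1, by omega, by_contra fun h => by have := hlo h; omega⟩
  obtain ⟨b', ⟨hk₀b', hb'⟩, hb'min⟩ := Int.exists_least_of_bdd
    (P := fun k => k₀ < k ∧ f k = 0) ⟨k₀, fun _ hk => hk.1.le⟩
    ⟨max hi k₀ + 1, by omega, by_contra fun h => by have := hhi h; omega⟩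
  refine ⟨a' + 1, b' - 1, by omega, by omega, by simpa using ha', by simpa using hb', ?_⟩
  rintro k ⟨hak, hkb⟩ hk
  rcases lt_trichotomy k k₀ with hlt | rfl | hgt
  · have := ha'max k ⟨hlt, hk⟩; omega
  · exact hk₀ hk
  · have := hb'min k ⟨hgt, hk⟩; omega

theorem exists_isIntervalDecomposition {f : ℤ → ℕ} (hf : {k | f k ≠ 0}.Finite) :
    ∃ M, IsIntervalDecomposition M f := by
  obtain ⟨s, hs⟩ : ∃ s : Finset ℤ, ∀ k, f k ≠ 0 → k ∈ s := ⟨hf.toFinset, by simp⟩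
  clear hf
  induction h : ∑ k ∈ s, f k using Nat.strong_induction_on generalizing f with
  | _ n ih =>
  rcases eq_or_ne f 0 with rfl | hne
  · exact ⟨0, by simp [IsIntervalDecomposition, coverCount, leftEndCount, rightEndCount]⟩
  obtain ⟨k₀, hk₀⟩ : ∃ k, f k ≠ 0 := Function.ne_iff.mp hne
  obtain ⟨a, b, hak₀, hk₀b, ha, hb, hpos⟩ :=
    exists_run_of_ne_zero (s.finite_toSet.subset hs) hk₀
  set g := f - (Icc a b).indicator 1
  have hfg : g + (Icc a b).indicator 1 = f := by
    ext k
    have := hpos k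
    simp only [g, Pi.add_apply, Pi.sub_apply, indicator_apply, mem_Icc, Pi.one_apply] at this ⊢
    split_ifs at this ⊢ <;> omega
  have hgf : ∀ k, g k ≤ f k := fun k => Nat.sub_le _ _
  have hg : ∀ k, g k ≠ 0 → k ∈ s := fun k hk => hs k (by have := hgf k; omega)
  have hlt : ∑ k ∈ s, g k < n := h ▸ Finset.sum_lt_sum (fun k _ => hgf k)
    ⟨k₀, hs k₀ hk₀, by simpa [g, hak₀, hk₀b] using Nat.pos_of_ne_zero hk₀⟩
  obtain ⟨M, hM⟩ := ih _ hlt hg rfl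
  have hga : g (a - 1) = 0 := by simp [g, ha]
  have hgb : g (b + 1) = 0 := by simp [g, hb]
  exact ⟨_, hfg ▸ hM.cons (hak₀.trans hk₀b) hga hgb⟩

/-- Combinatorial core of the classification of cyclic submodules of
`V_p` in the infinite-orbit case: a finitely supported function `f : ℤ → ℕ` satisfies the
difference inequalities governed by `P` and `Q` iff `f` is the "interval-count" function
of a finite multiset of integer intervals whose left endpoints are bounded by `Q` and
whose right endpoints are bounded by `P`. -/
theorem stmt_4 (f P Q : ℤ → ℕ) (hf : {k : ℤ | f k ≠ 0}.Finite) :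
    (∀ k : ℤ, (f k : ℤ) - f (k + 1) ≤ P k ∧ (f k : ℤ) - f (k - 1) ≤ Q k) ↔
      ∃ M : Multiset (ℤ × ℤ),
        (∀ ab ∈ M, ab.1 ≤ ab.2) ∧
        ∀ k : ℤ,
          f k = Multiset.card (M.filter (fun ab => ab.1 ≤ k ∧ k ≤ ab.2)) ∧
          Multiset.card (M.filter (fun ab => ab.1 = k)) ≤ Q k ∧
          Multiset.card (M.filter (fun ab => ab.2 = k)) ≤ P k := by
  constructor
  · intro hPQ
    obtain ⟨M, hvalid, hM⟩ := exists_isIntervalDecomposition hf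
    refine ⟨M, hvalid, fun k => ?_⟩
    obtain ⟨hcover, hleft, hright⟩ := hM k
    have := hPQ k
    refine ⟨hcover.symm, ?_, ?_⟩
    · change leftEndCount M k ≤ Q k
      omega
    · change rightEndCount M k ≤ P k
      omega
  · rintro ⟨M, -, hM⟩ k
    have hcover : ∀ j, f j = coverCount M j := fun j => (hM j).1
    have := coverCount_sub_coverCount_add_one_le M k
    have := coverCount_sub_coverCount_sub_one_le M k
    obtain ⟨-, hQ, hP⟩ := hM k
    change leftEndCount M k ≤ Q k at hQ
    change rightEndCount M k ≤ P k at hP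
    rw [hcover k, hcover (k + 1), hcover (k - 1)]
    omega
end

section
/- Let R be a unique factorization domain with a ring automorphism σ, let p, q ∈ R, and let g ∈ R be nonzero. Then the following are equivalent: (i) the principal ideal ⟨g⟩ is (p,q)-invariant; (ii) g divides σ^{−1}(g)·p and g divides σ(g)·q; (iii) the multiset of irreducible factors of g is contained, counting multiplicities and up to associates, in the multiset union of the irreducible factors of σ^{−1}(g) and the irreducible factors of p, and likewise the multiset of irreducible factors of g is contained in the multiset union of the irreducible factors of σ(g) and the irreducible factors of q. -/
namespace Multiset

variable {α : Type*} {r : α → α → Prop}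

theorem Rel.symm [Std.Symm r] {s t : Multiset α} (h : Rel r s t) : Rel r t s :=
  (rel_flip.mpr h).mono fun _ _ _ _ hab => Std.Symm.symm _ _ hab

theorem Rel.exists_le_rel_iff [IsTrans α r] [Std.Symm r] {t t' u : Multiset α} (h : Rel r t t') :
    (∃ s ≤ t, Rel r u s) ↔ ∃ s ≤ t', Rel r u s := by
  suffices key : ∀ {t t'}, Rel r t t' → (∃ s ≤ t, Rel r u s) → ∃ s ≤ t', Rel r u s from
    ⟨key h, key h.symm⟩
  rintro t t' htt' ⟨s, hst, hus⟩
  obtain ⟨s', rfl⟩ := le_iff_exists_add.mp hst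
  obtain ⟨v, v', hsv, -, rfl⟩ := rel_add_left.mp htt'
  exact ⟨v, le_add_right _ _, hus.trans r hsv⟩

theorem Rel.associated_prod {M : Type*} [CommMonoid M] {s t : Multiset M}
    (h : Rel Associated s t) : Associated s.prod t.prod := by
  rw [← Associates.mk_eq_mk_iff_associated, ← Associates.prod_mk, ← Associates.prod_mk,
    Associates.rel_associated_iff_map_eq_map.mp h]

end Multiset

namespace UniqueFactorizationMonoid

variable {α : Type*} [CommMonoidWithZero α] [UniqueFactorizationMonoid α]

theorem dvd_iff_exists_le_factors {g x : α} (hg : g ≠ 0) (hx : x ≠ 0) :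
    g ∣ x ↔ ∃ s ≤ factors x, Multiset.Rel Associated (factors g) s := by
  constructor
  · rintro ⟨c, rfl⟩
    have hc : c ≠ 0 := right_ne_zero_of_mul hx
    rw [(factors_mul hg hc).exists_le_rel_iff]
    exact ⟨factors g, Multiset.le_add_right _ _, Multiset.rel_refl_of_refl_on fun _ _ => .refl _⟩
  · rintro ⟨s, hs, hgs⟩
    calc g ∣ s.prod := ((factors_prod hg).symm.trans hgs.associated_prod).dvd
      _ ∣ (factors x).prod := Multiset.prod_dvd_prod_of_le hs
      _ ∣ x := (factors_prod hx).dvd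

theorem dvd_mul_iff_exists_le_factors_add {g a b : α} (hg : g ≠ 0) (ha : a ≠ 0) (hb : b ≠ 0) :
    g ∣ a * b ↔ ∃ s ≤ factors a + factors b, Multiset.Rel Associated (factors g) s := by
  rw [dvd_iff_exists_le_factors hg (mul_ne_zero ha hb), (factors_mul ha hb).exists_le_rel_iff]

end UniqueFactorizationMonoid

theorem pqInvariant_span_singleton_iff {R : Type*} [CommRing R] (σ : R ≃+* R) (p q g : R) :
    PQInvariant σ p q (Ideal.span {g}) ↔ g ∣ σ⁻¹ g * p ∧ g ∣ σ g * q := by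
  simp only [PQInvariant, Ideal.mem_span_singleton]
  refine ⟨fun h => h g dvd_rfl, ?_⟩
  rintro ⟨hp, hq⟩ _ ⟨c, rfl⟩
  rw [map_mul, map_mul, mul_right_comm, mul_right_comm (σ g)]
  exact ⟨hp.mul_right _, hq.mul_right _⟩

open UniqueFactorizationMonoid in
theorem stmt_5_general {R : Type*} [CommRing R] [UniqueFactorizationMonoid R]
    (σ : R ≃+* R) (p q : R) (hp : p ≠ 0) (hq : q ≠ 0) (g : R) (hg : g ≠ 0) :
    List.TFAE [
      PQInvariant σ p q (Ideal.span {g}),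
      g ∣ σ⁻¹ g * p ∧ g ∣ σ g * q,
      (∃ s ≤ factors (σ⁻¹ g) + factors p, Multiset.Rel Associated (factors g) s) ∧
        (∃ s ≤ factors (σ g) + factors q, Multiset.Rel Associated (factors g) s)] := by
  have hσg : σ g ≠ 0 := (map_ne_zero_iff σ σ.injective).mpr hg
  have hσ'g : σ⁻¹ g ≠ 0 := (map_ne_zero_iff _ (σ⁻¹).injective).mpr hg
  tfae_have 1 ↔ 2 := pqInvariant_span_singleton_iff σ p q g
  tfae_have 2 ↔ 3 := by
    rw [dvd_mul_iff_exists_le_factors_add hg hσ'g hp, dvd_mul_iff_exists_le_factors_add hg hσg hq]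
  tfae_finish

open UniqueFactorizationMonoid in
/-- For a UFD `R`, nonzero `g` and (nonzero) `p, q`, the following are
equivalent: `⟨g⟩` is `(p,q)`-invariant; `g ∣ σ⁻¹(g)·p` and `g ∣ σ(g)·q`; the multiset of
irreducible factors of `g` is contained (with multiplicity, up to associates) in the
multiset union of those of `σ⁻¹(g)` and of `p`, and likewise for `σ(g)` and `q`. -/
theorem stmt_5 {R : Type*} [CommRing R] [IsDomain R] [UniqueFactorizationMonoid R]
    (σ : R ≃+* R) (p q : R) (hp : p ≠ 0) (hq : q ≠ 0) (g : R) (hg : g ≠ 0) :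
    List.TFAE [
      PQInvariant σ p q (Ideal.span {g}),
      g ∣ σ⁻¹ g * p ∧ g ∣ σ g * q,
      (∃ s ≤ factors (σ⁻¹ g) + factors p, Multiset.Rel Associated (factors g) s) ∧
        (∃ s ≤ factors (σ g) + factors q, Multiset.Rel Associated (factors g) s)] :=
  stmt_5_general σ p q hp hq g hg
end

section
/- Let R be a unique factorization domain with a ring automorphism σ, let p, q ∈ R be nonzero, and let g = g₁·g₂⋯g_m where each g_i is a nonzero nonunit and, for all i ≠ j, no irreducible factor of g_i is an associate of σ^k applied to an irreducible factor of g_j for any integer k (the factors of distinct g_i lie in distinct σ-orbits). Then the principal ideal ⟨g⟩ is (p,q)-invariant if and only if ⟨g_i⟩ is (p,q)-invariant for every 1 ≤ i ≤ m; moreover ⟨g⟩ = ⋂_{i=1}^{m} ⟨g_i⟩. -/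
/-!
If `⟨g⟩` is invariant and `g = gᵢ·h`, then for `x ∈ ⟨gᵢ⟩` we have `h·x ∈ ⟨g⟩`, so `gᵢ` divides
`σ^{∓1}(h) · σ^{∓1}(x) · (p or q)`. The orbit condition makes `gᵢ` relatively prime to every
`σ`-twist of `h`, so `gᵢ` divides `σ^{∓1}(x) · (p or q)`, i.e. `⟨gᵢ⟩` is invariant. Conversely,
pairwise relative primality gives `⟨g⟩ = ⋂ ⟨gᵢ⟩`, and intersections of invariant ideals are
invariant.
-/

section Invariance

variable {R : Type*} [CommRing R] {σ : R ≃+* R} {p q : R}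

theorem PQInvariant.iInf {ι : Type*} {I : ι → Ideal R} (hI : ∀ i, PQInvariant σ p q (I i)) :
    PQInvariant σ p q (⨅ i, I i) := by
  intro x hx
  simp only [Submodule.mem_iInf] at hx ⊢
  exact ⟨fun i => (hI i x (hx i)).1, fun i => (hI i x (hx i)).2⟩

theorem PQInvariant.span_singleton_of_span_mul [DecompositionMonoid R] {a h : R}
    (H : PQInvariant σ p q (Ideal.span {a * h}))
    (hσinv : IsRelPrime a (σ⁻¹ h)) (hσ : IsRelPrime a (σ h)) :
    PQInvariant σ p q (Ideal.span {a}) := by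
  intro x hx
  rw [Ideal.mem_span_singleton] at hx
  have hhx : h * x ∈ Ideal.span {a * h} := by
    rw [Ideal.mem_span_singleton, mul_comm h]
    exact mul_dvd_mul_right hx h
  have cancel (τ : R ≃+* R) (r : R) (hrel : IsRelPrime a (τ h))
      (hdvd : τ (h * x) * r ∈ Ideal.span {a * h}) : τ x * r ∈ Ideal.span {a} := by
    rw [Ideal.mem_span_singleton, map_mul, mul_assoc] at *
    exact hrel.dvd_of_dvd_mul_left ((dvd_mul_right a h).trans hdvd)
  obtain ⟨H₁, H₂⟩ := H _ hhx
  exact ⟨cancel _ p hσinv H₁, cancel _ q hσ H₂⟩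

end Invariance

theorem isRelPrime_map_of_forall_not_associated {R : Type*} [CommSemiring R] [WfDvdMonoid R]
    (τ : R ≃+* R) {a b : R} (ha : a ≠ 0)
    (h : ∀ z w : R, Irreducible z → z ∣ a → Irreducible w → w ∣ b → ¬ Associated z (τ w)) :
    IsRelPrime a (τ b) := by
  refine WfDvdMonoid.isRelPrime_of_no_irreducible_factors (ha ·.1) fun z hz hza hzb => ?_
  refine h z (τ.symm z) hz hza ((MulEquiv.irreducible_iff τ.symm.toMulEquiv).mpr hz) ?_ ?_
  · simpa using map_dvd τ.symm hzb
  · rw [τ.apply_symm_apply]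

theorem Ideal.span_singleton_prod_eq_iInf_of_pairwise_isRelPrime {R : Type*} [CommSemiring R]
    [DecompositionMonoid R] {ι : Type*} [Fintype ι] {g : ι → R}
    (hg : Pairwise (Function.onFun IsRelPrime g)) :
    Ideal.span {∏ i, g i} = ⨅ i, Ideal.span {g i} := by
  ext x
  simp only [Ideal.mem_span_singleton, Ideal.mem_iInf]
  exact ⟨fun h i => (Finset.dvd_prod_of_mem g (Finset.mem_univ i)).trans h,
    Fintype.prod_dvd_of_isRelPrime hg⟩

theorem stmt_6_general {R : Type*} [CommRing R] [IsDomain R] [UniqueFactorizationMonoid R]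
    (σ : R ≃+* R) (p q : R)
    (m : ℕ) (g : Fin m → R)
    (hg0 : ∀ i, g i ≠ 0)
    (hdisj : ∀ i j, i ≠ j → ∀ z w : R, Irreducible z → z ∣ g i → Irreducible w → w ∣ g j →
      ∀ k : ℤ, ¬ Associated z ((σ ^ k) w)) :
    (PQInvariant σ p q (Ideal.span {∏ i, g i}) ↔
        ∀ i, PQInvariant σ p q (Ideal.span {g i})) ∧
      Ideal.span {∏ i, g i} = ⨅ i, Ideal.span {g i} := by
  classical
  have hrel (i : Fin m) (k : ℤ) (s : Finset (Fin m)) (hi : i ∉ s) :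
      IsRelPrime (g i) ((σ ^ k) (∏ j ∈ s, g j)) := by
    refine isRelPrime_map_of_forall_not_associated _ (hg0 i) fun z w hz hzi hw hws => ?_
    obtain ⟨j, hj, hwj⟩ := hw.prime.exists_mem_finset_dvd hws
    exact hdisj i j (fun hij => hi (hij ▸ hj)) z w hz hzi hw hwj k
  have hpair : Pairwise (Function.onFun IsRelPrime g) := fun i j hij => by
    simpa using hrel i 0 {j} (Finset.notMem_singleton.mpr hij)
  have hspan := Ideal.span_singleton_prod_eq_iInf_of_pairwise_isRelPrime hpair
  refine ⟨⟨fun H i => ?_, fun H => hspan ▸ PQInvariant.iInf H⟩, hspan⟩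
  rw [← Finset.mul_prod_erase _ g (Finset.mem_univ i)] at H
  refine H.span_singleton_of_span_mul ?_ ?_
  · simpa using hrel i (-1) _ (Finset.notMem_erase i _)
  · simpa using hrel i 1 _ (Finset.notMem_erase i _)

/-- Orbit-wise reduction for cyclic submodules of `V_p` over a UFD:
if `g = g₁ ⋯ g_m` where the `gᵢ` are nonzero nonunits whose irreducible factors lie in
pairwise distinct `σ`-orbits, then `⟨g⟩` is `(p,q)`-invariant iff each `⟨gᵢ⟩` is, and
moreover `⟨g⟩ = ⋂ᵢ ⟨gᵢ⟩`. -/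
theorem stmt_6 {R : Type*} [CommRing R] [IsDomain R] [UniqueFactorizationMonoid R]
    (σ : R ≃+* R) (p q : R) (hp : p ≠ 0) (hq : q ≠ 0)
    (m : ℕ) (g : Fin m → R)
    (hg0 : ∀ i, g i ≠ 0) (hgu : ∀ i, ¬ IsUnit (g i))
    (hdisj : ∀ i j, i ≠ j → ∀ z w : R, Irreducible z → z ∣ g i → Irreducible w → w ∣ g j →
      ∀ k : ℤ, ¬ Associated z ((σ ^ k) w)) :
    (PQInvariant σ p q (Ideal.span {∏ i, g i}) ↔
        ∀ i, PQInvariant σ p q (Ideal.span {g i})) ∧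
      Ideal.span {∏ i, g i} = ⨅ i, Ideal.span {g i} :=
  stmt_6_general σ p q m g hg0 hdisj
end

section
/- Let R be a unique factorization domain with a ring automorphism σ and let p, q ∈ R be nonzero. Let q₀ ∈ R be irreducible with q₀ dividing q, let n ≥ 0 be an integer such that σ^n(q₀) divides p, and assume that σ^i(q₀) and σ^j(q₀) are not associates for 0 ≤ i < j ≤ n. Then the principal ideal generated by the chain product ∏_{i=0}^{n} σ^i(q₀) is a (p,q)-invariant ideal of R. -/
section ChainProduct

variable {R : Type*} [CommSemiring R] (σ : R ≃+* R) (a : R)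

theorem mul_map_prod_range_pow_apply (n : ℕ) :
    a * σ (∏ i ∈ Finset.range n, (σ ^ i) a) = (∏ i ∈ Finset.range n, (σ ^ i) a) * (σ ^ n) a := by
  have shift : σ (∏ i ∈ Finset.range n, (σ ^ i) a) = ∏ i ∈ Finset.range n, (σ ^ (i + 1)) a := by
    rw [map_prod]
    exact Finset.prod_congr rfl fun i _ => by rw [pow_succ']; rfl
  rw [shift, mul_comm, ← Finset.prod_range_succ (fun i => (σ ^ i) a)]
  simpa using (Finset.prod_range_succ' (fun i => (σ ^ i) a) n).symm

theorem inv_apply_mul_prod_range_pow_apply (n : ℕ) :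
    σ⁻¹ a * ∏ i ∈ Finset.range (n + 1), (σ ^ i) a =
      σ⁻¹ (∏ i ∈ Finset.range (n + 1), (σ ^ i) a) * (σ ^ n) a := by
  have h := congrArg (σ⁻¹ : R ≃+* R) (mul_map_prod_range_pow_apply σ a (n + 1))
  have h_inv : σ⁻¹ (σ (∏ i ∈ Finset.range (n + 1), (σ ^ i) a)) =
      ∏ i ∈ Finset.range (n + 1), (σ ^ i) a :=
    σ.symm_apply_apply _
  have h_pow : σ⁻¹ ((σ ^ (n + 1)) a) = (σ ^ n) a := by
    rw [pow_succ']
    exact σ.symm_apply_apply _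
  rwa [map_mul, map_mul, h_inv, h_pow] at h

end ChainProduct

theorem pqInvariant_span_singleton_of_dvd {R : Type*} [CommRing R] {σ : R ≃+* R} {p q c : R}
    (hp : c ∣ σ⁻¹ c * p) (hq : c ∣ σ c * q) : PQInvariant σ p q (Ideal.span {c}) := by
  intro i hi
  obtain ⟨r, rfl⟩ := Ideal.mem_span_singleton.mp hi
  rw [Ideal.mem_span_singleton, Ideal.mem_span_singleton, map_mul, map_mul,
    mul_right_comm _ _ p, mul_right_comm _ _ q]
  exact ⟨dvd_mul_of_dvd_left hp _, dvd_mul_of_dvd_left hq _⟩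

theorem stmt_8_general {R : Type*} [CommRing R]
    (σ : R ≃+* R) (p q : R)
    (q₀ : R) (hq₀q : q₀ ∣ q)
    (n : ℕ) (hp₀ : (σ ^ n) q₀ ∣ p) :
    PQInvariant σ p q (Ideal.span {∏ i ∈ Finset.range (n + 1), (σ ^ i) q₀}) := by
  set c := ∏ i ∈ Finset.range (n + 1), (σ ^ i) q₀
  apply pqInvariant_span_singleton_of_dvd
  · have hc : σ⁻¹ c * (σ ^ n) q₀ = c * σ⁻¹ q₀ := by
      rw [← inv_apply_mul_prod_range_pow_apply, mul_comm]
    exact (dvd_mul_right c _).trans (hc ▸ mul_dvd_mul_left _ hp₀)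
  · have hc : σ c * q₀ = c * (σ ^ (n + 1)) q₀ := by
      rw [mul_comm, mul_map_prod_range_pow_apply]
    exact (dvd_mul_right c _).trans (hc ▸ mul_dvd_mul_left _ hq₀q)

/-- Basic submodules of `V_p` over a UFD: if `q₀` is irreducible with
`q₀ ∣ q`, `σ^n(q₀) ∣ p` for some `n ≥ 0`, and `σ^i(q₀)` (`0 ≤ i ≤ n`) are pairwise
non-associated, then the principal ideal generated by the chain product
`∏_{i=0}^{n} σ^i(q₀)` is `(p,q)`-invariant. -/
theorem stmt_8 {R : Type*} [CommRing R] [IsDomain R] [UniqueFactorizationMonoid R]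
    (σ : R ≃+* R) (p q : R) (hp : p ≠ 0) (hq : q ≠ 0)
    (q₀ : R) (hq₀ : Irreducible q₀) (hq₀q : q₀ ∣ q)
    (n : ℕ) (hp₀ : (σ ^ n) q₀ ∣ p)
    (hdist : ∀ i j : ℕ, i < j → j ≤ n → ¬ Associated ((σ ^ i) q₀) ((σ ^ j) q₀)) :
    PQInvariant σ p q (Ideal.span {∏ i ∈ Finset.range (n + 1), (σ ^ i) q₀}) :=
  stmt_8_general σ p q q₀ hq₀q n hp₀
end

section
/- Let R be a commutative integral domain with a ring automorphism σ and let p, q ∈ R with p·σ^{−1}(q) ≠ 0. Assume there is no infinite strictly descending chain I₀ ⊋ I₁ ⊋ I₂ ⊋ ⋯ of (p,q)-invariant ideals of R. Then every element r ∈ R for which there exist an integer n ≠ 0 and a unit u ∈ R with σ^n(r) = u·r is either zero or a unit of R; in particular, the fixed subring R^σ = {r ∈ R : σ(r) = r} is a field. -/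
open Finset

section

variable {R : Type*} [CommRing R] {σ : R ≃+* R}

theorem PQInvariant.span_singleton (p q : R) {s : R} (hs : Associated s (σ s)) :
    PQInvariant σ p q (Ideal.span {s}) := by
  have hσ : s ∣ σ s := hs.dvd
  have hσinv : s ∣ σ⁻¹ s := by simpa using map_dvd σ.symm hs.dvd'
  intro i hi
  obtain ⟨x, rfl⟩ := Ideal.mem_span_singleton'.mp hi
  simp only [Ideal.mem_span_singleton, map_mul]
  exact ⟨(dvd_mul_of_dvd_right hσinv _).mul_right _, (dvd_mul_of_dvd_right hσ _).mul_right _⟩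

theorem associated_apply_pow_natAbs {r : R} {n : ℤ} (h : Associated r ((σ ^ n) r)) :
    Associated r ((σ ^ n.natAbs) r) := by
  obtain ⟨k, rfl | rfl⟩ := Int.eq_nat_or_neg n
  · simpa using h
  · have hk : (σ ^ k) ((σ ^ (-(k : ℤ))) r) = r := by
      rw [zpow_neg, zpow_natCast]
      exact (σ ^ k).apply_symm_apply r
    simpa only [Int.natAbs_neg, Int.natAbs_natCast, hk] using (h.map (σ ^ k)).symm

theorem isField_eqLocus_id [Nontrivial R] (h : ∀ a, σ a = a → a ≠ 0 → IsUnit a) :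
    IsField (RingHom.eqLocus (σ : R →+* R) (RingHom.id R)) := by
  refine ⟨exists_pair_ne _, mul_comm, ?_⟩
  rintro ⟨a, ha : σ a = a⟩ ha0
  obtain ⟨w, rfl⟩ := h a ha fun h0 => ha0 (Subtype.ext h0)
  have hinv : σ ↑w⁻¹ = ↑w⁻¹ := by
    refine left_inv_eq_right_inv ?_ w.mul_inv
    rw [← ha, ← map_mul, w.inv_mul, map_one]
  exact ⟨⟨↑w⁻¹, hinv⟩, Subtype.ext w.mul_inv⟩

end

section

variable {R : Type*} [CommRing R] [IsDomain R] {σ : R ≃+* R}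

theorem associated_map_prod_range {r : R} (hr : r ≠ 0) {m : ℕ}
    (h : Associated r ((σ ^ m) r)) :
    Associated (∏ j ∈ range m, (σ ^ j) r) (σ (∏ j ∈ range m, (σ ^ j) r)) := by
  have hshift : σ (∏ j ∈ range m, (σ ^ j) r) = ∏ j ∈ range m, (σ ^ (j + 1)) r := by
    rw [map_prod]
    exact prod_congr rfl fun j _ => by rw [pow_succ']; rfl
  have htelescope :
      σ (∏ j ∈ range m, (σ ^ j) r) * r = (∏ j ∈ range m, (σ ^ j) r) * (σ ^ m) r := by
    rw [hshift, ← prod_range_succ, prod_range_succ']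
    rfl
  exact (Associated.of_mul_right (htelescope ▸ Associated.refl _) h hr).symm

variable {p q : R}

theorem isUnit_of_associated_apply
    (hdcc : ¬ ∃ I : ℕ → Ideal R, (∀ n, PQInvariant σ p q (I n)) ∧ ∀ n, I (n + 1) < I n)
    {s : R} (hs : Associated s (σ s)) (hs0 : s ≠ 0) : IsUnit s := by
  by_contra hsu
  refine hdcc ⟨fun k => Ideal.span {s ^ k}, fun k => PQInvariant.span_singleton p q ?_,
    fun k => Ideal.span_singleton_lt_span_singleton.mpr ⟨pow_ne_zero k hs0, s, hsu, pow_succ s k⟩⟩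
  simpa only [map_pow] using hs.pow_pow

theorem isUnit_of_associated_apply_pow
    (hdcc : ¬ ∃ I : ℕ → Ideal R, (∀ n, PQInvariant σ p q (I n)) ∧ ∀ n, I (n + 1) < I n)
    {r : R} (hr : r ≠ 0) {m : ℕ} (hm : 0 < m) (h : Associated r ((σ ^ m) r)) : IsUnit r := by
  have hnorm : IsUnit (∏ j ∈ range m, (σ ^ j) r) :=
    isUnit_of_associated_apply hdcc (associated_map_prod_range hr h)
      (prod_ne_zero_iff.mpr fun j _ => (map_ne_zero_iff _ (σ ^ j).injective).mpr hr)
  have hdvd : r ∣ ∏ j ∈ range m, (σ ^ j) r := by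
    simpa using dvd_prod_of_mem (fun j => (σ ^ j) r) (mem_range.mpr hm)
  exact isUnit_of_dvd_unit hdvd hnorm

end

theorem stmt_12_general {R : Type*} [CommRing R] [IsDomain R] (σ : R ≃+* R) (p q : R)
    (hdcc : ¬ ∃ I : ℕ → Ideal R, (∀ n, PQInvariant σ p q (I n)) ∧ ∀ n, I (n + 1) < I n) :
    (∀ r : R, (∃ n : ℤ, n ≠ 0 ∧ ∃ u : R, IsUnit u ∧ (σ ^ n) r = u * r) →
        r = 0 ∨ IsUnit r) ∧
      IsField (RingHom.eqLocus (σ : R →+* R) (RingHom.id R)) := by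
  have key : ∀ r : R, (∃ n : ℤ, n ≠ 0 ∧ ∃ u : R, IsUnit u ∧ (σ ^ n) r = u * r) →
      r = 0 ∨ IsUnit r := by
    rintro r ⟨n, hn, u, hu, hr⟩
    refine or_iff_not_imp_left.mpr fun hr0 => ?_
    have hassoc : Associated r ((σ ^ n) r) := hr ▸ (associated_unit_mul_left r u hu).symm
    exact isUnit_of_associated_apply_pow hdcc hr0 (Int.natAbs_pos.mpr hn)
      (associated_apply_pow_natAbs hassoc)
  refine ⟨key, isField_eqLocus_id fun a ha ha0 => ?_⟩
  refine (key a ⟨1, one_ne_zero, 1, isUnit_one, ?_⟩).resolve_left ha0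
  rwa [zpow_one, one_mul]

/-- If the rank-one `R`-free module `V_p` (i.e. the lattice of
`(p,q)`-invariant ideals) satisfies the descending chain condition, then every `r ∈ R`
with `σ^n(r) = u·r` for some `n ≠ 0` and unit `u` is zero or a unit; in particular the
fixed subring `R^σ` is a field. -/
theorem stmt_12 {R : Type*} [CommRing R] [IsDomain R] (σ : R ≃+* R) (p q : R)
    (hpq : p * σ⁻¹ q ≠ 0)
    (hdcc : ¬ ∃ I : ℕ → Ideal R, (∀ n, PQInvariant σ p q (I n)) ∧ ∀ n, I (n + 1) < I n) :
    (∀ r : R, (∃ n : ℤ, n ≠ 0 ∧ ∃ u : R, IsUnit u ∧ (σ ^ n) r = u * r) →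
        r = 0 ∨ IsUnit r) ∧
      IsField (RingHom.eqLocus (σ : R →+* R) (RingHom.id R)) :=
  stmt_12_general σ p q hdcc
end

section
/- For fixed integers n, j, k, there exist finite multisets S and T of integers satisfying the multiset equation {j} ∪ (S − n) ∪ T = {k} ∪ S ∪ (T − n), where S − n denotes the multiset {s − n : s ∈ S} and unions are multiset unions counted with multiplicity, if and only if n divides j − k. -/
/-!
Summing both sides of the equation gives `j - k = (|S| - |T|) • n`, so `n ∣ j - k`. Conversely,
if `j = k + m n` with `m ≥ 0`, the arithmetic progression `S = {k + n, k + 2n, …, k + m n}` with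
`T = ∅` solves the equation, since shifting `S` down by `n` trades its top element `j` for `k`;
the case `m < 0` is symmetric, with the roles of `S` and `T` exchanged.
-/

namespace Multiset

variable {G : Type*} [AddCommGroup G]

theorem sum_map_sub_const (s : Multiset G) (d : G) :
    (s.map (· - d)).sum = s.sum - card s • d := by
  rw [sum_map_sub, map_id', map_const', sum_replicate]

theorem exists_singleton_add_map_sub_eq (a d : G) (m : ℕ) :
    ∃ S : Multiset G, {a + m • d} + S.map (· - d) = {a} + S := by
  induction m with
  | zero => exact ⟨0, by simp⟩
  | succ m ih =>
    obtain ⟨S, hS⟩ := ih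
    refine ⟨(a + (m + 1) • d) ::ₘ S, ?_⟩
    have htop : a + (m + 1) • d - d = a + m • d := by rw [succ_nsmul]; abel
    rw [map_cons, htop, ← singleton_add (a + m • d), hS, ← singleton_add (a + (m + 1) • d),
      add_left_comm]

end Multiset

/-- For fixed integers `n, j, k`, the multiset equation
`{j} ∪ (S − n) ∪ T = {k} ∪ S ∪ (T − n)` has a solution in finite multisets `S, T` of
integers if and only if `n ∣ j − k`. -/
theorem stmt_13 (n j k : ℤ) :
    (∃ S T : Multiset ℤ,
        ({j} : Multiset ℤ) + S.map (fun s => s - n) + T =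
          ({k} : Multiset ℤ) + S + T.map (fun t => t - n)) ↔ n ∣ j - k := by
  constructor
  · rintro ⟨S, T, h⟩
    have hsum := congrArg Multiset.sum h
    simp only [Multiset.sum_add, Multiset.sum_singleton, Multiset.sum_map_sub_const,
      nsmul_eq_mul] at hsum
    exact ⟨S.card - T.card, by linarith⟩
  · rintro ⟨d, hd⟩
    obtain ⟨m, rfl | rfl⟩ := Int.eq_nat_or_neg d
    · obtain ⟨S, hS⟩ := Multiset.exists_singleton_add_map_sub_eq k n m
      have hj : j = k + m • n := by rw [nsmul_eq_mul]; linarith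
      exact ⟨S, 0, by simpa [hj] using hS⟩
    · obtain ⟨T, hT⟩ := Multiset.exists_singleton_add_map_sub_eq j n m
      have hk : k = j + m • n := by rw [nsmul_eq_mul]; linarith
      exact ⟨0, T, by simpa [hk] using hT.symm⟩
end

section
/- Let R be a commutative integral domain with a ring automorphism σ and let p, q ∈ R. If I is a (p,q)-invariant ideal of R, then its radical √I = {r ∈ R : r^n ∈ I for some n ≥ 1} is also a (p,q)-invariant ideal; moreover, if I ≠ R then √I ≠ R. -/
theorem Ideal.map_mul_mem_radical {R F : Type*} [CommSemiring R] [FunLike F R R]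
    [MonoidHomClass F R R] (f : F) (c : R) {I : Ideal R} (hI : ∀ i ∈ I, f i * c ∈ I)
    {r : R} (hr : r ∈ I.radical) : f r * c ∈ I.radical := by
  obtain ⟨n, hn⟩ := hr
  -- Pass to the exponent `n + 1` so that at least one factor `c` is available.
  have hpow : f (r ^ (n + 1)) * c ∈ I := hI _ (pow_succ r n ▸ I.mul_mem_right r hn)
  refine ⟨n + 1, ?_⟩
  have hexpand : (f r * c) ^ (n + 1) = f (r ^ (n + 1)) * c * c ^ n := by rw [map_pow]; ring
  exact hexpand ▸ I.mul_mem_right _ hpow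

theorem PQInvariant.radical {R : Type*} [CommRing R] {σ : R ≃+* R} {p q : R} {I : Ideal R}
    (hI : PQInvariant σ p q I) : PQInvariant σ p q I.radical := fun _ hr =>
  ⟨Ideal.map_mul_mem_radical σ⁻¹ p (fun i hi => (hI i hi).1) hr,
    Ideal.map_mul_mem_radical σ q (fun i hi => (hI i hi).2) hr⟩

theorem stmt_15_general {R : Type*} [CommRing R] (σ : R ≃+* R) (p q : R)
    (I : Ideal R) (hI : PQInvariant σ p q I) :
    PQInvariant σ p q I.radical ∧ (I ≠ ⊤ → I.radical ≠ ⊤) :=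
  ⟨hI.radical, mt Ideal.radical_eq_top.mp⟩

/-- The radical of a `(p,q)`-invariant ideal of a domain is again
`(p,q)`-invariant, and the radical of a proper ideal is proper. -/
theorem stmt_15 {R : Type*} [CommRing R] [IsDomain R] (σ : R ≃+* R) (p q : R)
    (I : Ideal R) (hI : PQInvariant σ p q I) :
    PQInvariant σ p q I.radical ∧ (I ≠ ⊤ → I.radical ≠ ⊤) :=
  stmt_15_general σ p q I hI
end

section
/- Let R be a commutative integral domain with a ring automorphism σ, and let P, P' be n×n matrices over R. Then there exists an R-module automorphism φ of R^n satisfying φ(P·σ^{−1}(v)) = P'·σ^{−1}(φ(v)) for all v ∈ R^n (where σ^{−1} is applied entrywise to vectors) if and only if there exists an invertible matrix S ∈ GL_n(R) such that P' = S·P·σ^{−1}(S)^{−1}, where σ^{−1} is applied entrywise to matrices. -/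
/-! Writing an automorphism as `φ = S *ᵥ ·` with `S` invertible, `σ⁻¹(S v) = σ⁻¹(S) σ⁻¹(v)` turns
the intertwining condition into `S P σ⁻¹(v) = P' σ⁻¹(S) σ⁻¹(v)` for all `v`. As `σ⁻¹` is
surjective on vectors, this says `S P = P' σ⁻¹(S)`, i.e. `P' = S P σ⁻¹(S)⁻¹`. -/

namespace Matrix

section Semiring

variable {R m n : Type*} [Semiring R] [Fintype n]

theorem map_ringEquiv_mulVec (e : R ≃+* R) (S : Matrix m n R) (v : n → R) :
    (fun i => e ((S *ᵥ v) i)) = S.map e *ᵥ fun i => e (v i) :=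
  funext (e.toRingHom.map_mulVec S v)

theorem mulVec_ringEquiv_comp_inj_iff (e : R ≃+* R) {A B : Matrix m n R} :
    (∀ v : n → R, (A *ᵥ fun i => e (v i)) = B *ᵥ fun i => e (v i)) ↔ A = B := by
  refine ⟨fun h => mulVec_injective (funext fun w => ?_), fun h _ => h ▸ rfl⟩
  simpa using h fun i => e.symm (w i)

end Semiring

variable {R n : Type*} [CommRing R] [Fintype n]

theorem mulVec_intertwines_iff (e : R ≃+* R) (S P P' : Matrix n n R) :
    (∀ v : n → R, S *ᵥ (P *ᵥ fun i => e (v i)) = P' *ᵥ fun i => e ((S *ᵥ v) i)) ↔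
      S * P = P' * S.map e := by
  simp only [map_ringEquiv_mulVec, mulVec_mulVec]
  exact mulVec_ringEquiv_comp_inj_iff e

variable [DecidableEq n]

theorem isUnit_det_map_ringEquiv (e : R ≃+* R) {S : Matrix n n R} (hS : IsUnit S.det) :
    IsUnit (S.map e).det := by
  simpa [RingEquiv.map_det] using hS.map e

theorem eq_mul_mul_inv_iff {S P P' T : Matrix n n R} (hT : IsUnit T.det) :
    P' = S * P * T⁻¹ ↔ S * P = P' * T := by
  have := T.invertibleOfIsUnitDet hT
  rw [eq_comm, mul_inv_eq_iff_eq_mul_of_invertible]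

end Matrix

open Matrix in
theorem LinearEquiv.exists_isUnit_det_mulVec {R n : Type*} [CommRing R] [Fintype n]
    [DecidableEq n] (φ : (n → R) ≃ₗ[R] n → R) :
    ∃ S : Matrix n n R, IsUnit S.det ∧ ∀ v, φ v = S *ᵥ v := by
  refine ⟨LinearMap.toMatrix' φ.toLinearMap, ?_, fun v => (LinearMap.toMatrix'_mulVec _ v).symm⟩
  rw [LinearMap.det_toMatrix']
  exact φ.isUnit_det'

open Matrix in
theorem stmt_16_general {R : Type*} [CommRing R] (σ : R ≃+* R) (n : ℕ)
    (P P' : Matrix (Fin n) (Fin n) R) :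
    (∃ φ : (Fin n → R) ≃ₗ[R] (Fin n → R),
        ∀ v : Fin n → R,
          φ (P.mulVec fun i => σ⁻¹ (v i)) = P'.mulVec fun i => σ⁻¹ (φ v i)) ↔
      ∃ S : Matrix (Fin n) (Fin n) R, IsUnit S.det ∧
        P' = S * P * (S.map fun r => σ⁻¹ r)⁻¹ := by
  constructor
  · rintro ⟨φ, hφ⟩
    obtain ⟨S, hS, hφS⟩ := φ.exists_isUnit_det_mulVec
    refine ⟨S, hS, ?_⟩
    rw [eq_mul_mul_inv_iff (isUnit_det_map_ringEquiv σ⁻¹ hS), ← mulVec_intertwines_iff]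
    simpa only [hφS] using hφ
  · rintro ⟨S, hS, hP'⟩
    rw [eq_mul_mul_inv_iff (isUnit_det_map_ringEquiv σ⁻¹ hS), ← mulVec_intertwines_iff] at hP'
    exact ⟨S.toLinearEquiv' (S.invertibleOfIsUnitDet hS), hP'⟩

/-- Isomorphism criterion for the rank-`n` `R`-free modules `V_P` over
a GWA: there is an `R`-module automorphism `φ` of `R^n` intertwining the `x`-actions
`v ↦ P·σ⁻¹(v)` and `v ↦ P'·σ⁻¹(v)` iff `P' = S·P·σ⁻¹(S)⁻¹` for some `S ∈ GL_n(R)`. -/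
theorem stmt_16 {R : Type*} [CommRing R] [IsDomain R] (σ : R ≃+* R) (n : ℕ)
    (P P' : Matrix (Fin n) (Fin n) R) :
    (∃ φ : (Fin n → R) ≃ₗ[R] (Fin n → R),
        ∀ v : Fin n → R,
          φ (P.mulVec fun i => σ⁻¹ (v i)) = P'.mulVec fun i => σ⁻¹ (φ v i)) ↔
      ∃ S : Matrix (Fin n) (Fin n) R, IsUnit S.det ∧
        P' = S * P * (S.map fun r => σ⁻¹ r)⁻¹ :=
  stmt_16_general σ n P P'
end

section
/- Let R be a commutative integral domain with a ring automorphism σ, let a ∈ R be nonzero, and let p, p' be divisors of a; set q = σ(a/p) and q' = σ(a/p'). (a) If v ∈ R satisfies p·v = σ^{−1}(v)·p', then also q·v = σ(v)·q'. (b) If there exists a unit v ∈ R with p·v = σ^{−1}(v)·p', then p and p' are associates in R. -/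
/-!
Multiplying `p * v = σ⁻¹ v * p'` by the cofactor `r'` and using `p * r = a = p' * r'` gives
`p * (v * r') = p * (σ⁻¹ v * r)`; cancelling `p ≠ 0` and applying `σ` yields `σ v * σ r' = v * σ r`,
which is (a). For (b), `p * v = σ⁻¹ v * p'` exhibits `p'` as `p` times a unit.
-/

theorem mul_cofactor_eq_mul_cofactor {M : Type*} [CommMonoidWithZero M] [IsCancelMulZero M]
    {a p r p' r' v w : M} (ha : a ≠ 0) (hpr : a = p * r) (hpr' : a = p' * r')
    (h : p * v = w * p') : v * r' = w * r := by
  have hp : p ≠ 0 := left_ne_zero_of_mul (hpr ▸ ha)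
  refine mul_left_cancel₀ hp ?_
  calc p * (v * r') = w * (p' * r') := by rw [← mul_assoc, h, mul_assoc]
    _ = p * (w * r) := by rw [← hpr', hpr, mul_left_comm]

/-- Homomorphisms between rank-one `R`-free modules `V_p → V_{p'}`
over the GWA `R(σ,a)` (given by `1 ↦ v` with `p·v = σ⁻¹(v)·p'`) automatically intertwine
the `y`-actions, and if such a `v` is a unit then `p` and `p'` are associates. -/
theorem stmt_19 {R : Type*} [CommRing R] [IsDomain R] (σ : R ≃+* R)
    (a : R) (ha : a ≠ 0) (p r p' r' : R) (hpr : a = p * r) (hpr' : a = p' * r')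
    (q q' : R) (hq : q = σ r) (hq' : q' = σ r') :
    (∀ v : R, p * v = σ⁻¹ v * p' → q * v = σ v * q') ∧
      (∀ v : R, IsUnit v → p * v = σ⁻¹ v * p' → Associated p p') := by
  refine ⟨fun v hv => ?_, fun v hunit hv => ?_⟩
  · have hσ : σ v * σ r' = v * σ r := by
      simpa using congrArg σ (mul_cofactor_eq_mul_cofactor ha hpr hpr' hv)
    rw [hq, hq', hσ, mul_comm]
  · exact (associated_mul_unit_right p v hunit).trans
      (hv ▸ associated_unit_mul_left p' _ (hunit.map σ⁻¹))
end
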